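/- arXiv:1306.6744 — 6 statements merged into one kernel-verified Lean document; each statement's English description precedes it below -/
import Mathlib

section
/- The number of permutations of {1,...,2n} equals the sum over pairs (α, β), where α is a Dyck path of length 2n and β is a Dyck path of length 2n+2, of the product ∏_{i=1}^n h_i(α)·h_i*(β), where h_i denotes the height of the i-th down step and h_i* equals h_i - 1 if there is no up step to the right of the i-th down step and h_i otherwise. -/
open Finset

/-- `D ⊆ {1,…,L}` is the set of down steps of a Dyck path of length `L`:
it has `L/2` elements and every prefix has at least as many up steps as down steps. -/
def IsDyck (L : ℕ) (D : Finset ℕ) : Prop :=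
  D ⊆ Finset.Icc 1 L ∧ 2 * D.card = L ∧ ∀ k ≤ L, 2 * (D.filter (· ≤ k)).card ≤ k

instance (L : ℕ) : DecidablePred (IsDyck L) := fun D => by
  unfold IsDyck; infer_instance

/-- The collection of all Dyck paths (encoded by their down-step sets) of length `L`. -/
def dyckPaths (L : ℕ) : Finset (Finset ℕ) :=
  (Finset.Icc 1 L).powerset.filter (IsDyck L)

/-- The position (in `{1,…,L}`) of the `i`-th down step (`1`-indexed). -/
def dstep (D : Finset ℕ) (i : ℕ) : ℕ := (D.sort (· ≤ ·)).getD (i - 1) 0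

/-- The height `h_i` of the `i`-th down step of a Dyck path:  the step goes from
`(d_i - 1, h_i)` to `(d_i, h_i - 1)`; equivalently `h_i = d_i + 1 - 2 i`. -/
def ht (D : Finset ℕ) (i : ℕ) : ℕ := dstep D i + 1 - 2 * i

/-- The modified height `h_i^*`: equal to `h_i - 1` if there is no up step to the right of
the `i`-th down step, and to `h_i` otherwise. -/
def hstar (L : ℕ) (D : Finset ℕ) (i : ℕ) : ℕ :=
  if Finset.Ioc (dstep D i) L ⊆ D then ht D i - 1 else ht D i

/-- `crossout w k` is the pair (positions marked A, positions marked B) after `k` rounds of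
the crossout procedure: in each round, first mark B at the unmarked position with the smallest
value `w i`, then mark A at the leftmost unmarked position. -/
def crossout {N : ℕ} (w : Equiv.Perm (Fin N)) : ℕ → Finset (Fin N) × Finset (Fin N)
  | 0 => (∅, ∅)
  | k + 1 =>
    let p := crossout w k
    let u := (Finset.univ : Finset (Fin N)) \ (p.1 ∪ p.2)
    if hu : u.Nonempty then
      let b := w.symm ((u.image w).min' (hu.image _))
      if ha : (u.erase b).Nonempty then
        (insert ((u.erase b).min' ha) p.1, insert b p.2)
      else (p.1, insert b p.2)
    else p

/-- The set of positions marked A under the crossout procedure. -/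
def markA {N : ℕ} (w : Equiv.Perm (Fin N)) : Finset (Fin N) := (crossout w N).1

/-- The set of positions marked B under the crossout procedure. -/
def markB {N : ℕ} (w : Equiv.Perm (Fin N)) : Finset (Fin N) := (crossout w N).2

/-- Down-step set of Alice's path `p_A(w)`:  the values (in `{1,…,N}`) at positions marked A. -/
def pAset {N : ℕ} (w : Equiv.Perm (Fin N)) : Finset ℕ :=
  (markA w).image (fun a => Fin.val (w a) + 1)

/-- Down-step set of Bob's path `p_B(w)`:  `{b + 1 : b marked B} ∪ {N + 2}`
(positions taken in `{1,…,N}`, so `b + 1` becomes `(b : ℕ) + 2`). -/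
def pBset {N : ℕ} (w : Equiv.Perm (Fin N)) : Finset ℕ :=
  insert (N + 2) ((markB w).image (fun b => Fin.val b + 2))

/-- Number of AA inversions of `w`. -/
def aaInv {N : ℕ} (w : Equiv.Perm (Fin N)) : ℕ :=
  (Finset.univ.filter (fun p : Fin N × Fin N =>
    p.1 < p.2 ∧ w p.2 < w p.1 ∧ p.1 ∈ markA w ∧ p.2 ∈ markA w)).card

/-- Number of BB inversions of `w`. -/
def bbInv {N : ℕ} (w : Equiv.Perm (Fin N)) : ℕ :=
  (Finset.univ.filter (fun p : Fin N × Fin N =>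
    p.1 < p.2 ∧ w p.2 < w p.1 ∧ p.1 ∈ markB w ∧ p.2 ∈ markB w)).card

/-- Number of AB inversions of `w`. -/
def abInv {N : ℕ} (w : Equiv.Perm (Fin N)) : ℕ :=
  (Finset.univ.filter (fun p : Fin N × Fin N =>
    p.1 < p.2 ∧ w p.2 < w p.1 ∧ p.1 ∈ markA w ∧ p.2 ∈ markB w)).card

/-- Total number of inversions of `w`. -/
def invW {N : ℕ} (w : Equiv.Perm (Fin N)) : ℕ :=
  (Finset.univ.filter (fun p : Fin N × Fin N => p.1 < p.2 ∧ w p.2 < w p.1)).card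

/-- The statistic `z(w) = #{i < j : w i < w j and i is marked B}`. -/
def zstat {N : ℕ} (w : Equiv.Perm (Fin N)) : ℕ :=
  (Finset.univ.filter (fun p : Fin N × Fin N =>
    p.1 < p.2 ∧ w p.1 < w p.2 ∧ p.1 ∈ markB w)).card

/-- Label carried by the down step of `p_A` corresponding to the A-position `a`:
one plus the number of A-positions to the left of `a` with larger value. -/
def labelA {N : ℕ} (w : Equiv.Perm (Fin N)) (a : Fin N) : ℕ :=
  1 + ((markA w).filter (fun a' => a' < a ∧ w a < w a')).card

/-- The label sequence `ℓ` of `p_A(w)`: `ellSeq w r` is the label on the `r`-th down step. -/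
def ellSeq {N : ℕ} (w : Equiv.Perm (Fin N)) (r : ℕ) : ℕ :=
  ∑ a ∈ (markA w).filter (fun a => Fin.val (w a) + 1 = dstep (pAset w) r), labelA w a

/-- Label carried by the down step of `p_B` corresponding to the B-position `b`:
one plus the number of B-positions to the right of `b` with smaller value. -/
def labelB {N : ℕ} (w : Equiv.Perm (Fin N)) (b : Fin N) : ℕ :=
  1 + ((markB w).filter (fun b' => w b' < w b ∧ b < b')).card

/-- The label sequence `m` of `p_B(w)`: `emSeq w r` is the label on the `r`-th down step. -/
def emSeq {N : ℕ} (w : Equiv.Perm (Fin N)) (r : ℕ) : ℕ :=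
  ∑ b ∈ (markB w).filter (fun b => Fin.val b + 2 = dstep (pBset w) r), labelB w b

/-- The `q`-integer `[k]_q = 1 + q + ⋯ + q^{k-1}` in `ℤ[q]`. -/
noncomputable def qint (k : ℕ) : Polynomial ℤ := ∑ j ∈ Finset.range k, Polynomial.X ^ j

/-- The `q`-integer `[k]` in the variable `X v` of the two-variable polynomial ring. -/
noncomputable def qint2 (v : Fin 2) (k : ℕ) : MvPolynomial (Fin 2) ℤ :=
  ∑ j ∈ Finset.range k, (MvPolynomial.X v) ^ j

/-- `M` is a perfect matching of `{1,…,2n}`: a family of pairwise disjoint 2-element sets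
whose union is `{1,…,2n}`. -/
def IsMatching (n : ℕ) (M : Finset (Finset ℕ)) : Prop :=
  (∀ e ∈ M, e.card = 2) ∧ (M : Set (Finset ℕ)).PairwiseDisjoint id ∧
    M.biUnion id = Finset.Icc 1 (2 * n)

/-!
Both sums factor. Over Dyck prefixes of length `m` with `c` down steps, `∏ hᵢ` sums to
`C(m, 2c) (2c - 1)‼`, the number of partial matchings of `{1, …, m}` with `c` arcs: a final
down step, at height `m - 2c`, pairs the last point with one of the `m - 2c` points left
unmatched. So the `α`-sum is `(2n - 1)‼`. Cutting `β` at its last up step, at position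
`n + 1 + r`, leaves a Dyck prefix of length `n + r` with `r` down steps, followed by down steps
whose `h*` are `n - r, …, 1, 0`. So the `β`-sum is `∑_{r ≤ n} (n + r)! / (2^r r!)`, which
telescopes to `2^n n!`, and `(2n - 1)‼ · 2^n n! = (2n)!`.
-/

open scoped Nat

namespace Finset

variable {α : Type*} [LinearOrder α]

theorem sort_union_of_forall_lt {s t : Finset α} (h : ∀ x ∈ s, ∀ y ∈ t, x < y) :
    (s ∪ t).sort = s.sort ++ t.sort := by
  refine (sortedLT_sort _).eq_of_mem_iff ?_ fun a => by simp
  rw [List.sortedLT_iff_pairwise, List.pairwise_append]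
  exact ⟨(sortedLT_sort s).pairwise, (sortedLT_sort t).pairwise,
    fun x hx y hy => h x (mem_sort _ |>.1 hx) y (mem_sort _ |>.1 hy)⟩

theorem sort_Ioc_add (u k : ℕ) : (Ioc u (u + k)).sort = List.range' (u + 1) k :=
  (sortedLT_sort _).eq_of_mem_iff (List.sortedLT_range' _ _ one_ne_zero) fun a => by
    simp only [mem_sort, mem_Ioc, List.mem_range'_1]
    omega

end Finset

section dstep

variable {s t : Finset ℕ} {i : ℕ}

lemma dstep_mem (h1 : 1 ≤ i) (h2 : i ≤ s.card) : dstep s i ∈ s := by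
  have hl : i - 1 < (s.sort (· ≤ ·)).length := by rw [length_sort]; omega
  rw [dstep, List.getD_eq_getElem _ _ hl]
  exact (mem_sort _).1 (List.getElem_mem hl)

lemma dstep_union_of_le_card (h : ∀ x ∈ s, ∀ y ∈ t, x < y) (h1 : 1 ≤ i)
    (h2 : i ≤ s.card) :
    dstep (s ∪ t) i = dstep s i := by
  rw [dstep, dstep, sort_union_of_forall_lt h,
    List.getD_append _ _ _ _ (by rw [length_sort]; omega)]

lemma dstep_union_card_add (h : ∀ x ∈ s, ∀ y ∈ t, x < y) (h1 : 1 ≤ i) :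
    dstep (s ∪ t) (s.card + i) = dstep t i := by
  rw [dstep, dstep, sort_union_of_forall_lt h,
    List.getD_append_right _ _ _ _ (by rw [length_sort]; omega), length_sort]
  congr 1
  omega

lemma dstep_Ioc_add {u k : ℕ} (h1 : 1 ≤ i) (h2 : i ≤ k) :
    dstep (Ioc u (u + k)) i = u + i := by
  rw [dstep, sort_Ioc_add, List.getD_eq_getElem _ _ (by rw [List.length_range']; omega),
    List.getElem_range']
  omega

end dstep

def dyckPrefixes (m c : ℕ) : Finset (Finset ℕ) :=
  (Icc 1 m).powerset.filter fun D =>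
    D.card = c ∧ ∀ k ≤ m, 2 * (D.filter (· ≤ k)).card ≤ k

def prefixHeightSum (m c : ℕ) : ℕ := ∑ D ∈ dyckPrefixes m c, ∏ i ∈ Icc 1 c, ht D i

section dyckPrefixes

variable {m c : ℕ} {D : Finset ℕ}

lemma mem_dyckPrefixes : D ∈ dyckPrefixes m c ↔
    D ⊆ Icc 1 m ∧ D.card = c ∧ ∀ k ≤ m, 2 * (D.filter (· ≤ k)).card ≤ k := by
  simp [dyckPrefixes]

lemma mem_dyckPaths {L : ℕ} : D ∈ dyckPaths L ↔ IsDyck L D := by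
  simp only [dyckPaths, mem_filter, mem_powerset]
  exact and_iff_right_of_imp (·.1)

lemma dyckPaths_two_mul (c : ℕ) : dyckPaths (2 * c) = dyckPrefixes (2 * c) c := by
  ext D
  rw [mem_dyckPaths, IsDyck, mem_dyckPrefixes]
  constructor <;> rintro ⟨hsub, hcard, hpre⟩ <;> exact ⟨hsub, by omega, hpre⟩

lemma filter_le_eq_self (hD : D ⊆ Icc 1 m) {k : ℕ} (hk : m ≤ k) : D.filter (· ≤ k) = D :=
  filter_true_of_mem fun _ hx => ((mem_Icc.1 (hD hx)).2).trans hk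

lemma two_mul_le_of_mem_dyckPrefixes (hD : D ∈ dyckPrefixes m c) : 2 * c ≤ m := by
  obtain ⟨hsub, rfl, hpre⟩ := mem_dyckPrefixes.1 hD
  simpa [filter_le_eq_self hsub le_rfl] using hpre m le_rfl

lemma dyckPrefixes_eq_empty (h : m < 2 * c) : dyckPrefixes m c = ∅ :=
  eq_empty_of_forall_notMem fun _ hD => (two_mul_le_of_mem_dyckPrefixes hD).not_gt h

lemma dyckPrefixes_zero_right (m : ℕ) : dyckPrefixes m 0 = {∅} := by
  ext D
  simp only [mem_dyckPrefixes, mem_singleton, card_eq_zero]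
  constructor
  · exact fun h => h.2.1
  · rintro rfl
    simp

lemma filter_notMem_dyckPrefixes_succ :
    (dyckPrefixes (m + 1) c).filter (m + 1 ∉ ·) = dyckPrefixes m c := by
  ext D
  simp only [mem_filter, mem_dyckPrefixes]
  constructor
  · rintro ⟨⟨hsub, hcard, hpre⟩, hm⟩
    refine ⟨fun x hx => ?_, hcard, fun k hk => hpre k (by omega)⟩
    have := mem_Icc.1 (hsub hx)
    have : x ≠ m + 1 := by rintro rfl; exact hm hx
    simp only [mem_Icc]
    omega
  · rintro ⟨hsub, hcard, hpre⟩
    refine ⟨⟨hsub.trans (Icc_subset_Icc_right (by omega)), hcard, fun k hk => ?_⟩,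
      fun hm => by simpa using hsub hm⟩
    have htop := hpre m le_rfl
    rw [filter_le_eq_self hsub le_rfl] at htop
    rcases Nat.lt_or_ge k (m + 1) with hk' | hk'
    · exact hpre k (by omega)
    · have := card_filter_le D (· ≤ k)
      omega

lemma filter_mem_dyckPrefixes_succ (h : 2 * c < m) :
    (dyckPrefixes (m + 1) (c + 1)).filter (m + 1 ∈ ·) =
      (dyckPrefixes m c).image (insert (m + 1)) := by
  ext D
  simp only [mem_filter, mem_image, mem_dyckPrefixes]
  constructor
  · rintro ⟨⟨hsub, hcard, hpre⟩, hm⟩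
    refine ⟨D.erase (m + 1), ⟨fun x hx => ?_, by rw [card_erase_of_mem hm, hcard]; rfl,
      fun k hk => ?_⟩, insert_erase hm⟩
    · have := mem_Icc.1 (hsub (mem_of_mem_erase hx))
      have := ne_of_mem_erase hx
      simp only [mem_Icc]
      omega
    · rw [filter_erase, erase_eq_of_notMem fun h => by have := (mem_filter.1 h).2; omega]
      exact hpre k (by omega)
  · rintro ⟨D, ⟨hsub, hcard, hpre⟩, rfl⟩
    have hm : m + 1 ∉ D := fun hm => by simpa using hsub hm
    refine ⟨⟨insert_subset (by simp) (hsub.trans (Icc_subset_Icc_right (by omega))),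
      by rw [card_insert_of_notMem hm, hcard], fun k hk => ?_⟩, mem_insert_self _ _⟩
    rcases Nat.lt_or_ge k (m + 1) with hk' | hk'
    · rw [filter_insert, if_neg (by omega)]
      exact hpre k (by omega)
    · rw [filter_le_eq_self (insert_subset (by simp) (hsub.trans
        (Icc_subset_Icc_right (by omega)))) hk', card_insert_of_notMem hm, hcard]
      omega

lemma prod_ht_insert (hD : D ∈ dyckPrefixes m c) :
    ∏ i ∈ Icc 1 (c + 1), ht (insert (m + 1) D) i = (m - 2 * c) * ∏ i ∈ Icc 1 c, ht D i := by
  obtain ⟨hsub, rfl, -⟩ := mem_dyckPrefixes.1 hD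
  have hlt : ∀ x ∈ D, ∀ y ∈ ({m + 1} : Finset ℕ), x < y := fun x hx y hy => by
    have := mem_Icc.1 (hsub hx)
    rw [mem_singleton.1 hy]
    omega
  rw [insert_eq, union_comm, prod_Icc_succ_top (by omega), mul_comm]
  congr 1
  · have htop : dstep (D ∪ {m + 1}) (D.card + 1) = m + 1 :=
      (dstep_union_card_add hlt le_rfl).trans (by simp [dstep])
    rw [ht, htop]
    omega
  · exact prod_congr rfl fun i hi => by
      rw [ht, ht, dstep_union_of_le_card hlt (mem_Icc.1 hi).1 (mem_Icc.1 hi).2]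

end dyckPrefixes

lemma prefixHeightSum_zero_right (m : ℕ) : prefixHeightSum m 0 = 1 := by
  simp [prefixHeightSum, dyckPrefixes_zero_right]

lemma prefixHeightSum_succ_succ (m c : ℕ) :
    prefixHeightSum (m + 1) (c + 1) =
      prefixHeightSum m (c + 1) + (m - 2 * c) * prefixHeightSum m c := by
  rcases Nat.lt_or_ge (2 * c) m with h | h
  · have hinj : Set.InjOn (insert (m + 1) : Finset ℕ → Finset ℕ) (dyckPrefixes m c) := by
      have hm {D} (hD : D ∈ dyckPrefixes m c) : m + 1 ∉ D := fun hm => by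
        simpa using (mem_dyckPrefixes.1 hD).1 hm
      intro D hD D' hD' hDD'
      rw [← erase_insert (hm hD), hDD', erase_insert (hm hD')]
    rw [prefixHeightSum, ← sum_filter_not_add_sum_filter _ (m + 1 ∈ ·),
      filter_notMem_dyckPrefixes_succ, filter_mem_dyckPrefixes_succ h, sum_image hinj,
      prefixHeightSum, prefixHeightSum, mul_sum]
    exact congrArg _ (sum_congr rfl fun D hD => prod_ht_insert hD)
  · simp [prefixHeightSum, dyckPrefixes_eq_empty (show m + 1 < 2 * (c + 1) by omega),
      dyckPrefixes_eq_empty (show m < 2 * (c + 1) by omega), Nat.sub_eq_zero_of_le h]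

theorem prefixHeightSum_eq_choose_mul_doubleFactorial (m c : ℕ) :
    prefixHeightSum m c = m.choose (2 * c) * (2 * c - 1)‼ := by
  induction m generalizing c with
  | zero =>
    cases c with
    | zero => simp [prefixHeightSum_zero_right]
    | succ c =>
      simp [prefixHeightSum, dyckPrefixes_eq_empty (show 0 < 2 * (c + 1) by omega),
        Nat.choose_eq_zero_of_lt (show 0 < 2 * (c + 1) by omega)]
  | succ m ih =>
    cases c with
    | zero => simp [prefixHeightSum_zero_right]
    | succ c =>
      have hodd : (2 * (c + 1) - 1)‼ = (2 * c + 1) * (2 * c - 1)‼ := by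
        rw [show 2 * (c + 1) - 1 = 2 * c + 1 by omega, Nat.doubleFactorial_add_one]
      have hlast : (m - 2 * c) * (m.choose (2 * c) * (2 * c - 1)‼) =
          m.choose (2 * c + 1) * ((2 * c + 1) * (2 * c - 1)‼) := by
        rw [← mul_assoc, ← mul_assoc, mul_comm (m - 2 * c), ← Nat.choose_succ_right_eq]
      rw [prefixHeightSum_succ_succ, ih, ih, hodd, show 2 * (c + 1) = 2 * c + 1 + 1 by ring,
        Nat.choose_succ_succ', hlast]
      ring

theorem Nat.factorial_two_mul_eq_doubleFactorial_mul (n : ℕ) :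
    (2 * n)! = (2 * n - 1)‼ * (2 ^ n * n !) := by
  cases n with
  | zero => rfl
  | succ n =>
    rw [← Nat.doubleFactorial_two_mul, show 2 * (n + 1) = 2 * n + 1 + 1 by ring,
      Nat.factorial_eq_mul_doubleFactorial, mul_comm, Nat.add_sub_cancel]

theorem sum_range_factorial_add_div_two_pow_mul (n : ℕ) :
    ∑ r ∈ range (n + 1), ((n + r)! : ℚ) / (2 ^ r * r !) = 2 ^ n * n ! := by
  induction n with
  | zero => simp
  | succ n ih =>
    set t : ℕ → ℚ := fun r => ((n + r)! : ℚ) / (2 ^ r * r !) with ht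
    have hshift : ∀ r, ((n + 1 + r)! : ℚ) / (2 ^ r * r !) = (n + 1 + r) * t r := fun r => by
      rw [ht, show n + 1 + r = n + r + 1 by ring, Nat.factorial_succ]
      push_cast
      ring
    have hstep : ∀ r, 2 * (r + 1) * t (r + 1) = (n + 1 + r) * t r := fun r => by
      simp only [ht, show n + (r + 1) = n + r + 1 by ring, Nat.factorial_succ, pow_succ]
      push_cast
      field_simp
      ring
    -- `(n + 1 + r) t r = 2 (n + 1) t r - (n + 1 - r) t r`, and by `hstep` the last term telescopes
    calc ∑ r ∈ range (n + 1 + 1), ((n + 1 + r)! : ℚ) / (2 ^ r * r !)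
        = ∑ r ∈ range (n + 2),
            (2 * (n + 1) * t r - (2 * (r + 1) * t (r + 1) - 2 * r * t r)) :=
          sum_congr rfl fun r _ => by rw [hshift, hstep]; ring
      _ = 2 * (n + 1) * (∑ r ∈ range (n + 1), t r + t (n + 1)) - 2 * (n + 2) * t (n + 2) := by
          have htel := sum_range_sub (fun r => 2 * (r : ℚ) * t r) (n + 2)
          push_cast at htel
          rw [sum_sub_distrib, ← mul_sum, sum_range_succ _ (n + 1), htel]
          ring
      _ = 2 ^ (n + 1) * (n + 1)! := by
          rw [ih, show (n : ℚ) + 2 = (n + 1 : ℕ) + 1 by push_cast; ring, hstep,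
            Nat.factorial_succ]
          push_cast
          ring

def lastUp (L : ℕ) (β : Finset ℕ) : ℕ := Nat.findGreatest (· ∉ β) L

section lastUp

variable {L : ℕ} {β : Finset ℕ}

lemma lastUp_notMem (hβ : β ⊆ Icc 1 L) : lastUp L β ∉ β :=
  Nat.findGreatest_spec (P := (· ∉ β)) (Nat.zero_le L) fun h => by simpa using hβ h

lemma Ioc_lastUp_subset : Ioc (lastUp L β) L ⊆ β := fun _ hk =>
  not_not.1 (Nat.findGreatest_is_greatest (mem_Ioc.1 hk).1 (mem_Ioc.1 hk).2)

lemma filter_lt_lastUp_union_Ioc (hβ : β ⊆ Icc 1 L) :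
    β.filter (· < lastUp L β) ∪ Ioc (lastUp L β) L = β := by
  refine subset_antisymm (union_subset (filter_subset _ _) Ioc_lastUp_subset) fun x hx => ?_
  have hne : x ≠ lastUp L β := by rintro rfl; exact lastUp_notMem hβ hx
  rcases Nat.lt_or_gt_of_ne hne with h | h
  · exact mem_union_left _ (mem_filter.2 ⟨hx, h⟩)
  · exact mem_union_right _ (mem_Ioc.2 ⟨h, (mem_Icc.1 (hβ hx)).2⟩)

lemma lastUp_eq {u : ℕ} (hu : u ≤ L) (huβ : u ∉ β) (hIoc : Ioc u L ⊆ β) :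
    lastUp L β = u := by
  refine le_antisymm (not_lt.1 fun h => ?_) (Nat.le_findGreatest hu huβ)
  exact Nat.findGreatest_spec (P := (· ∉ β)) hu huβ
    (hIoc (mem_Ioc.2 ⟨h, Nat.findGreatest_le L⟩))

end lastUp

section cutAtLastUp

variable {n r : ℕ} {D β : Finset ℕ}

lemma exists_lastUp_eq (hβ : IsDyck (2 * n + 2) β) :
    ∃ r ≤ n, lastUp (2 * n + 2) β = n + 1 + r := by
  obtain ⟨hsub, hcard, hpre⟩ := hβ
  have hlow := card_le_card (Ioc_lastUp_subset (L := 2 * n + 2) (β := β))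
  rw [Nat.card_Ioc] at hlow
  suffices lastUp (2 * n + 2) β < 2 * n + 2 from
    ⟨lastUp (2 * n + 2) β - (n + 1), by omega, by omega⟩
  refine not_le.1 fun h => ?_
  have htop : lastUp (2 * n + 2) β = 2 * n + 2 := le_antisymm (Nat.findGreatest_le _) h
  have hfil : β.filter (· ≤ 2 * n + 1) = β := filter_true_of_mem fun x hx => by
    have := (mem_Icc.1 (hsub hx)).2
    have : x ≠ 2 * n + 2 := by rintro rfl; exact lastUp_notMem hsub (htop.symm ▸ hx)
    omega
  have := hpre (2 * n + 1) (by omega)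
  rw [hfil] at this
  omega

lemma filter_lt_mem_dyckPrefixes (hβ : IsDyck (2 * n + 2) β)
    (hu : lastUp (2 * n + 2) β = n + 1 + r) :
    β.filter (· < n + 1 + r) ∈ dyckPrefixes (n + r) r := by
  have hle : lastUp (2 * n + 2) β ≤ 2 * n + 2 := Nat.findGreatest_le _
  obtain ⟨hsub, hcard, hpre⟩ := hβ
  have hsplit := filter_lt_lastUp_union_Ioc hsub
  rw [hu] at hsplit
  have hdisj : Disjoint (β.filter (· < n + 1 + r)) (Ioc (n + 1 + r) (2 * n + 2)) :=
    disjoint_left.2 fun x hx hx' => by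
      have := (mem_filter.1 hx).2
      have := (mem_Ioc.1 hx').1
      omega
  have hcard' := congrArg card hsplit
  rw [card_union_of_disjoint hdisj, Nat.card_Ioc] at hcard'
  refine mem_dyckPrefixes.2 ⟨fun x hx => ?_, by omega, fun k hk => ?_⟩
  · obtain ⟨hxβ, hx⟩ := mem_filter.1 hx
    have := (mem_Icc.1 (hsub hxβ)).1
    exact mem_Icc.2 ⟨this, by omega⟩
  · rw [filter_filter, filter_congr fun x _ => and_iff_right_of_imp fun (h : x ≤ k) => by omega]
    exact hpre k (by omega)

lemma lt_of_mem_dyckPrefixes (hD : D ∈ dyckPrefixes (n + r) r) {x : ℕ} (hx : x ∈ D) :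
    x < n + 1 + r := by
  have := (mem_Icc.1 ((mem_dyckPrefixes.1 hD).1 hx)).2
  omega

lemma isDyck_union_Ioc (hr : r ≤ n) (hD : D ∈ dyckPrefixes (n + r) r) :
    IsDyck (2 * n + 2) (D ∪ Ioc (n + 1 + r) (2 * n + 2)) := by
  obtain ⟨hsub, hcard, hpre⟩ := mem_dyckPrefixes.1 hD
  have hdisj : Disjoint D (Ioc (n + 1 + r) (2 * n + 2)) := disjoint_left.2 fun x hx hx' => by
    have := lt_of_mem_dyckPrefixes hD hx
    have := (mem_Ioc.1 hx').1
    omega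
  refine ⟨union_subset (hsub.trans (Icc_subset_Icc_right (by omega))) fun x hx => ?_, ?_,
    fun k hk => ?_⟩
  · have := mem_Ioc.1 hx
    exact mem_Icc.2 ⟨by omega, this.2⟩
  · rw [card_union_of_disjoint hdisj, hcard, Nat.card_Ioc]
    omega
  · have htail : ((Ioc (n + 1 + r) (2 * n + 2)).filter (· ≤ k)).card ≤ k - (n + 1 + r) := by
      rw [← Nat.card_Ioc]
      exact card_le_card fun x hx => by
        have := mem_filter.1 hx
        have := mem_Ioc.1 this.1
        exact mem_Ioc.2 ⟨by omega, by omega⟩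
    have hunion := card_union_le (D.filter (· ≤ k))
      ((Ioc (n + 1 + r) (2 * n + 2)).filter (· ≤ k))
    rw [← filter_union] at hunion
    rcases le_or_gt k (n + r) with hk' | hk'
    · have := hpre k hk'
      omega
    · have := card_filter_le D (· ≤ k)
      omega

lemma lastUp_union_Ioc (hr : r ≤ n) (hD : D ∈ dyckPrefixes (n + r) r) :
    lastUp (2 * n + 2) (D ∪ Ioc (n + 1 + r) (2 * n + 2)) = n + 1 + r :=
  lastUp_eq (by omega) (by simpa using fun h => (lt_of_mem_dyckPrefixes hD h).ne rfl)
    subset_union_right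

lemma filter_lt_union_Ioc (hD : D ∈ dyckPrefixes (n + r) r) :
    (D ∪ Ioc (n + 1 + r) (2 * n + 2)).filter (· < n + 1 + r) = D := by
  rw [filter_union, filter_true_of_mem fun _ => lt_of_mem_dyckPrefixes hD,
    filter_false_of_mem fun x hx => not_lt.2 (mem_Ioc.1 hx).1.le, union_empty]

lemma prod_Ioc_sub_eq_factorial (r n : ℕ) : ∏ i ∈ Ioc r n, (n + 1 - i) = (n - r)! := by
  rw [← prod_range_add_one_eq_factorial]
  refine prod_nbij' (n - ·) (n - ·) (fun i hi => ?_) (fun j hj => ?_) (fun i hi => ?_)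
    (fun j hj => ?_) (fun i hi => ?_) <;>
  simp only [mem_Ioc, mem_range] at * <;> omega

lemma prod_hstar_union_Ioc (hr : r ≤ n) (hD : D ∈ dyckPrefixes (n + r) r) :
    ∏ i ∈ Icc 1 n, hstar (2 * n + 2) (D ∪ Ioc (n + 1 + r) (2 * n + 2)) i =
      (∏ i ∈ Icc 1 r, ht D i) * (n - r)! := by
  obtain ⟨hsub, hcard, -⟩ := mem_dyckPrefixes.1 hD
  set β := D ∪ Ioc (n + 1 + r) (2 * n + 2)
  have hlt : ∀ x ∈ D, ∀ y ∈ Ioc (n + 1 + r) (2 * n + 2), x < y := fun x hx y hy =>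
    (lt_of_mem_dyckPrefixes hD hx).trans (mem_Ioc.1 hy).1
  have hu : n + 1 + r ∉ β := by
    simpa [β] using fun h => (lt_of_mem_dyckPrefixes hD h).ne rfl
  have hhead : ∀ i ∈ Icc 1 r, hstar (2 * n + 2) β i = ht D i := fun i hi => by
    obtain ⟨h1, h2⟩ := mem_Icc.1 hi
    have hd := dstep_union_of_le_card hlt h1 (hcard ▸ h2)
    have hlt' := lt_of_mem_dyckPrefixes hD (dstep_mem h1 (hcard ▸ h2))
    rw [hstar, if_neg fun h => hu (h (mem_Ioc.2 ⟨hd ▸ hlt', by omega⟩)), ht, ht, hd]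
  have htail : ∀ i ∈ Ioc r n, hstar (2 * n + 2) β i = n + 1 - i := fun i hi => by
    obtain ⟨h1, h2⟩ := mem_Ioc.1 hi
    have hrun : Ioc (n + 1 + r) (2 * n + 2) = Ioc (n + 1 + r) (n + 1 + r + (n + 1 - r)) := by
      congr 1
      omega
    have hd : dstep β i = n + 1 + r + (i - r) := by
      calc dstep β i
            = dstep (D ∪ Ioc (n + 1 + r) (n + 1 + r + (n + 1 - r))) (D.card + (i - r)) := by
            rw [hcard, Nat.add_sub_cancel' h1.le, ← hrun]
        _ = n + 1 + r + (i - r) := by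
            rw [dstep_union_card_add (hrun ▸ hlt) (by omega), dstep_Ioc_add (by omega) (by omega)]
    have hfinal : Ioc (dstep β i) (2 * n + 2) ⊆ β := fun x hx => by
      rw [hd, mem_Ioc] at hx
      exact mem_union_right _ (mem_Ioc.2 ⟨by omega, hx.2⟩)
    rw [hstar, if_pos hfinal, ht, hd]
    omega
  rw [show Icc 1 n = Ioc 0 n from Icc_add_one_left_eq_Ioc 0 n,
    ← prod_Ioc_consecutive _ (Nat.zero_le r) hr, ← Icc_add_one_left_eq_Ioc 0 r, zero_add,
    prod_congr rfl hhead, prod_congr rfl htail,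
    prod_Ioc_sub_eq_factorial]

end cutAtLastUp

theorem sum_dyckPaths_prod_hstar_eq_sum (n : ℕ) :
    ∑ β ∈ dyckPaths (2 * n + 2), ∏ i ∈ Icc 1 n, hstar (2 * n + 2) β i =
      ∑ r ∈ range (n + 1), prefixHeightSum (n + r) r * (n - r)! := by
  simp_rw [prefixHeightSum, sum_mul]
  rw [sum_sigma']
  refine sum_bij'
    (fun β _ => ⟨lastUp (2 * n + 2) β - (n + 1), β.filter (· < lastUp (2 * n + 2) β)⟩)
    (fun x _ => x.2 ∪ Ioc (n + 1 + x.1) (2 * n + 2)) (fun β hβ => ?_) (fun x hx => ?_)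
    (fun β hβ => ?_) (fun x hx => ?_) (fun β hβ => ?_)
  · obtain ⟨r, hr, hu⟩ := exists_lastUp_eq (mem_dyckPaths.1 hβ)
    rw [hu, Nat.add_sub_cancel_left]
    exact mem_sigma.2 ⟨mem_range.2 (Nat.lt_succ_of_le hr),
      filter_lt_mem_dyckPrefixes (mem_dyckPaths.1 hβ) hu⟩
  · obtain ⟨hr, hD⟩ := mem_sigma.1 hx
    exact mem_dyckPaths.2 (isDyck_union_Ioc (Nat.le_of_lt_succ (mem_range.1 hr)) hD)
  · obtain ⟨r, hr, hu⟩ := exists_lastUp_eq (mem_dyckPaths.1 hβ)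
    dsimp only
    rw [hu, Nat.add_sub_cancel_left, ← hu]
    exact filter_lt_lastUp_union_Ioc (mem_dyckPaths.1 hβ).1
  · obtain ⟨hr, hD⟩ := mem_sigma.1 hx
    rw [lastUp_union_Ioc (Nat.le_of_lt_succ (mem_range.1 hr)) hD, Nat.add_sub_cancel_left,
      filter_lt_union_Ioc hD]
  · obtain ⟨r, hr, hu⟩ := exists_lastUp_eq (mem_dyckPaths.1 hβ)
    dsimp only
    rw [hu, Nat.add_sub_cancel_left,
      ← prod_hstar_union_Ioc hr (filter_lt_mem_dyckPrefixes (mem_dyckPaths.1 hβ) hu), ← hu,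
      filter_lt_lastUp_union_Ioc (mem_dyckPaths.1 hβ).1]

theorem sum_dyckPaths_prod_hstar (n : ℕ) :
    ∑ β ∈ dyckPaths (2 * n + 2), ∏ i ∈ Icc 1 n, hstar (2 * n + 2) β i = 2 ^ n * n ! := by
  rw [sum_dyckPaths_prod_hstar_eq_sum]
  have hterm : ∀ r ∈ range (n + 1),
      ((prefixHeightSum (n + r) r * (n - r)! : ℕ) : ℚ) = (n + r)! / (2 ^ r * r !) := by
    intro r hr
    have hr : 2 * r ≤ n + r := by have := mem_range.1 hr; omega
    rw [prefixHeightSum_eq_choose_mul_doubleFactorial, Nat.cast_mul, Nat.cast_mul,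
      Nat.cast_choose ℚ hr, Nat.factorial_two_mul_eq_doubleFactorial_mul,
      show n + r - 2 * r = n - r by omega]
    push_cast
    field_simp
  exact_mod_cast (Nat.cast_sum (R := ℚ) _ _).trans ((sum_congr rfl hterm).trans
    (sum_range_factorial_add_div_two_pow_mul n))

/-- the number of permutations of `{1,…,2n}` equals the sum over pairs of
Dyck paths `α` (length `2n`) and `β` (length `2n+2`) of `∏_{i=1}^n h_i(α) h_i^*(β)`. -/
theorem stmt0 (n : ℕ) :
    Fintype.card (Equiv.Perm (Fin (2 * n))) =
      ∑ α ∈ dyckPaths (2 * n), ∑ β ∈ dyckPaths (2 * n + 2),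
        ∏ i ∈ Finset.Icc 1 n, ht α i * hstar (2 * n + 2) β i := by
  have hα : ∑ α ∈ dyckPaths (2 * n), ∏ i ∈ Icc 1 n, ht α i = (2 * n - 1)‼ := by
    rw [dyckPaths_two_mul, ← prefixHeightSum, prefixHeightSum_eq_choose_mul_doubleFactorial,
      Nat.choose_self, one_mul]
  simp_rw [prod_mul_distrib, ← mul_sum, ← sum_mul, hα, sum_dyckPaths_prod_hstar]
  rw [Fintype.card_perm, Fintype.card_fin, Nat.factorial_two_mul_eq_doubleFactorial_mul]
end

section
/- For every n ≥ 1 and any variable q, the sum over all Dyck paths α of length 2n of ∏_{i=1}^n q^{h_i(α)-1}·[h_i(α)]_q equals [1]_q·[3]_q···[2n-1]_q, where [k]_q = 1 + q + ··· + q^{k-1}. -/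
open Finset

/-!
Let `E(m, k)` be the weighted count of lattice paths of length `m` that stay weakly above the
axis and end at height `k`, a down step from height `h` weighing `q^(h-1) [h]_q`. Removing the
last step gives `E(m+1, k) = E(m, k-1) + q^k [k+1]_q E(m, k+1)`. With `p = q²` and the Gaussian
binomial `[a, b]_p`, this recursion is solved by
`E(2a, 2b) = [a, b]_p ∏_{b ≤ j < a} [2j+1]_q` and `E(2a+1, 2b+1) = [a, b]_p ∏_{b < j ≤ a} [2j+1]_q`:
the even-to-odd step is the absorption identity `(p^b - p^a) [a, b]_p = p^b (1 - p^(b+1)) [a, b+1]_p`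
(times `q`, divided by `1 - q`), the odd-to-even step is Pascal's rule. The theorem is `E(2n, 0)`.
-/

open Polynomial

section GaussBinom

variable {R : Type*} [CommRing R] (p : R)

def gaussBinom : ℕ → ℕ → R
  | _, 0 => 1
  | 0, _ + 1 => 0
  | a + 1, b + 1 => gaussBinom a b + p ^ (b + 1) * gaussBinom a (b + 1)

@[simp]
lemma gaussBinom_zero_right (a : ℕ) : gaussBinom p a 0 = 1 := by
  cases a <;> rfl

@[simp]
lemma gaussBinom_zero_succ (b : ℕ) : gaussBinom p 0 (b + 1) = 0 :=
  rfl

lemma gaussBinom_succ_succ (a b : ℕ) :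
    gaussBinom p (a + 1) (b + 1) = gaussBinom p a b + p ^ (b + 1) * gaussBinom p a (b + 1) :=
  rfl

lemma gaussBinom_eq_zero_of_lt {a b : ℕ} (h : a < b) : gaussBinom p a b = 0 := by
  induction a generalizing b with
  | zero => obtain ⟨b, rfl⟩ := Nat.exists_eq_add_one_of_ne_zero h.ne'; rfl
  | succ a ih =>
    obtain ⟨b, rfl⟩ := Nat.exists_eq_add_one_of_ne_zero (by omega : b ≠ 0)
    rw [gaussBinom_succ_succ, ih (by omega), ih (by omega), mul_zero, add_zero]

lemma gaussBinom_mul_pow_sub (a b : ℕ) :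
    (p ^ b - p ^ a) * gaussBinom p a b = p ^ b * (1 - p ^ (b + 1)) * gaussBinom p a (b + 1) := by
  induction a generalizing b with
  | zero => cases b <;> simp
  | succ a ih =>
    cases b with
    | zero =>
      have h := ih 0
      simp only [gaussBinom_zero_right, zero_add] at h ⊢
      rw [gaussBinom_succ_succ, gaussBinom_zero_right]
      linear_combination p * h
    | succ b =>
      rw [gaussBinom_succ_succ, gaussBinom_succ_succ]
      linear_combination p * ih b + p ^ (b + 2) * ih (b + 1)

end GaussBinom

lemma qint_mul_one_sub_X (k : ℕ) : qint k * (1 - X) = 1 - X ^ k :=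
  geom_sum_mul_neg X k

lemma qint_one : qint 1 = 1 := by
  simp [qint]

lemma gaussBinom_mul_qint_two_mul_add_one (a b : ℕ) :
    gaussBinom (X ^ 2 : ℤ[X]) a b * qint (2 * a + 1) =
      gaussBinom (X ^ 2) a b * qint (2 * b + 1) +
        X ^ (2 * b + 1) * qint (2 * (b + 1)) * gaussBinom (X ^ 2) a (b + 1) := by
  have h1X : (1 - X : ℤ[X]) ≠ 0 := fun h => by simpa using congrArg (eval 0) h
  refine mul_right_cancel₀ h1X ?_
  linear_combination gaussBinom (X ^ 2) a b * qint_mul_one_sub_X (2 * a + 1)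
    - gaussBinom (X ^ 2) a b * qint_mul_one_sub_X (2 * b + 1)
    - X ^ (2 * b + 1) * gaussBinom (X ^ 2) a (b + 1) * qint_mul_one_sub_X (2 * (b + 1))
    + X * gaussBinom_mul_pow_sub (X ^ 2 : ℤ[X]) a b

section Paths

variable {m k : ℕ} {D : Finset ℕ}

/-- `ht` indexed by the position `d ∈ D` of a down step rather than by its rank, so that it is
unaffected by appending steps on the right. -/
def downStepHeight (D : Finset ℕ) (d : ℕ) : ℕ := d + 1 - 2 * #(D.filter (· ≤ d))

/-- Down-step sets of the paths of length `m` that stay weakly above the axis and end at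
height `k`. -/
def prefixPaths (m k : ℕ) : Finset (Finset ℕ) :=
  (Icc 1 m).powerset.filter fun D => 2 * #D + k = m ∧ ∀ j ≤ m, 2 * #(D.filter (· ≤ j)) ≤ j

lemma mem_prefixPaths : D ∈ prefixPaths m k ↔
    D ⊆ Icc 1 m ∧ 2 * #D + k = m ∧ ∀ j ≤ m, 2 * #(D.filter (· ≤ j)) ≤ j := by
  simp [prefixPaths]

lemma dyckPaths_eq_prefixPaths (L : ℕ) : dyckPaths L = prefixPaths L 0 := by
  ext D
  simp only [dyckPaths, IsDyck, mem_filter, mem_powerset, mem_prefixPaths, add_zero]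
  tauto

lemma filter_le_eq_self_of_subset_Icc {j : ℕ} (hD : D ⊆ Icc 1 m) (hj : m ≤ j) :
    D.filter (· ≤ j) = D :=
  filter_true_of_mem fun _ hd => (mem_Icc.1 (hD hd)).2.trans hj

lemma succ_notMem_of_subset_Icc (hD : D ⊆ Icc 1 m) : m + 1 ∉ D :=
  fun h => by simpa using hD h

lemma subset_Icc_of_subset_Icc_succ (hD : D ⊆ Icc 1 (m + 1)) (hm : m + 1 ∉ D) :
    D ⊆ Icc 1 m := fun d hd => by
  have := mem_Icc.1 (hD hd)
  have : d ≠ m + 1 := by rintro rfl; exact hm hd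
  rw [mem_Icc]
  omega

lemma insert_mem_prefixPaths (hD : D ∈ prefixPaths m (k + 1)) :
    insert (m + 1) D ∈ prefixPaths (m + 1) k := by
  obtain ⟨hsub, hcard, hpre⟩ := mem_prefixPaths.1 hD
  have hm := succ_notMem_of_subset_Icc hsub
  have hsub' : insert (m + 1) D ⊆ Icc 1 (m + 1) :=
    insert_subset (by simp) (hsub.trans (Icc_subset_Icc_right m.le_succ))
  refine mem_prefixPaths.2 ⟨hsub', by rw [card_insert_of_notMem hm]; omega, fun j hj => ?_⟩
  rcases hj.lt_or_eq with hj | rfl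
  · rw [filter_insert, if_neg (by omega)]
    exact hpre j (by omega)
  · rw [filter_le_eq_self_of_subset_Icc hsub' le_rfl, card_insert_of_notMem hm]
    omega

lemma erase_mem_prefixPaths (hD : D ∈ prefixPaths (m + 1) k) (hm : m + 1 ∈ D) :
    D.erase (m + 1) ∈ prefixPaths m (k + 1) := by
  obtain ⟨hsub, hcard, hpre⟩ := mem_prefixPaths.1 hD
  refine mem_prefixPaths.2 ⟨subset_Icc_of_subset_Icc_succ ((erase_subset _ _).trans hsub)
    (notMem_erase _ _), ?_, fun j hj => ?_⟩
  · have := card_erase_of_mem hm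
    have := card_pos.2 ⟨_, hm⟩
    omega
  · exact (Nat.mul_le_mul_left 2 (card_le_card (filter_subset_filter _ (erase_subset _ _)))).trans
      (hpre j (by omega))

lemma mem_prefixPaths_succ_succ_iff (hm : m + 1 ∉ D) :
    D ∈ prefixPaths (m + 1) (k + 1) ↔ D ∈ prefixPaths m k := by
  simp only [mem_prefixPaths]
  constructor
  · rintro ⟨hsub, hcard, hpre⟩
    exact ⟨subset_Icc_of_subset_Icc_succ hsub hm, by omega, fun j hj => hpre j (by omega)⟩
  · rintro ⟨hsub, hcard, hpre⟩
    refine ⟨hsub.trans (Icc_subset_Icc_right m.le_succ), by omega, fun j hj => ?_⟩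
    rcases hj.lt_or_eq with hj | rfl
    · exact hpre j (by omega)
    · rw [filter_le_eq_self_of_subset_Icc hsub m.le_succ]
      omega

lemma succ_mem_of_mem_prefixPaths_succ_zero (hD : D ∈ prefixPaths (m + 1) 0) : m + 1 ∈ D := by
  obtain ⟨hsub, hcard, hpre⟩ := mem_prefixPaths.1 hD
  by_contra hm
  have := hpre m m.le_succ
  rw [filter_le_eq_self_of_subset_Icc (subset_Icc_of_subset_Icc_succ hsub hm) le_rfl] at this
  omega

variable {R : Type*} [CommSemiring R] (w : ℕ → R)

def pathWeight (D : Finset ℕ) : R := ∏ d ∈ D, w (downStepHeight D d)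

def pathSum (m k : ℕ) : R := ∑ D ∈ prefixPaths m k, pathWeight w D

lemma pathWeight_insert (hD : D ∈ prefixPaths m (k + 1)) :
    pathWeight w (insert (m + 1) D) = w (k + 1) * pathWeight w D := by
  obtain ⟨hsub, hcard, -⟩ := mem_prefixPaths.1 hD
  have hm := succ_notMem_of_subset_Icc hsub
  have hlast : downStepHeight (insert (m + 1) D) (m + 1) = k + 1 := by
    rw [downStepHeight, filter_insert, if_pos le_rfl,
      filter_le_eq_self_of_subset_Icc hsub m.le_succ, card_insert_of_notMem hm]
    omega
  rw [pathWeight, prod_insert hm, hlast, pathWeight]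
  congr 1
  refine prod_congr rfl fun d hd => ?_
  rw [downStepHeight, downStepHeight, filter_insert, if_neg]
  have := (mem_Icc.1 (hsub hd)).2
  omega

lemma sum_pathWeight_filter_succ_mem :
    ∑ D ∈ (prefixPaths (m + 1) k).filter (m + 1 ∈ ·), pathWeight w D =
      w (k + 1) * pathSum w m (k + 1) := by
  rw [pathSum, mul_sum]
  refine (sum_nbij' (insert (m + 1)) (·.erase (m + 1)) (fun D hD => ?_) (fun D hD => ?_)
    (fun D hD => ?_) (fun D hD => ?_) (fun D hD => ?_)).symm
  · exact mem_filter.2 ⟨insert_mem_prefixPaths hD, mem_insert_self _ _⟩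
  · obtain ⟨hD, hm⟩ := mem_filter.1 hD
    exact erase_mem_prefixPaths hD hm
  · exact erase_insert (succ_notMem_of_subset_Icc (mem_prefixPaths.1 hD).1)
  · exact insert_erase (mem_filter.1 hD).2
  · exact (pathWeight_insert w hD).symm

lemma pathSum_zero_zero : pathSum w 0 0 = 1 := by
  rw [pathSum, show prefixPaths 0 0 = {∅} by decide, sum_singleton, pathWeight, prod_empty]

lemma pathSum_zero_succ : pathSum w 0 (k + 1) = 0 := by
  refine sum_eq_zero fun D hD => ?_
  have := (mem_prefixPaths.1 hD).2.1
  omega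

lemma pathSum_succ_zero : pathSum w (m + 1) 0 = w 1 * pathSum w m 1 := by
  rw [pathSum, ← filter_true_of_mem fun D hD => succ_mem_of_mem_prefixPaths_succ_zero hD,
    sum_pathWeight_filter_succ_mem]

lemma pathSum_succ_succ :
    pathSum w (m + 1) (k + 1) = pathSum w m k + w (k + 2) * pathSum w m (k + 2) := by
  have hnot : (prefixPaths (m + 1) (k + 1)).filter (m + 1 ∉ ·) = prefixPaths m k := by
    ext D
    rw [mem_filter]
    constructor
    · rintro ⟨hD, hm⟩
      exact (mem_prefixPaths_succ_succ_iff hm).1 hD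
    · intro hD
      have hm := succ_notMem_of_subset_Icc (mem_prefixPaths.1 hD).1
      exact ⟨(mem_prefixPaths_succ_succ_iff hm).2 hD, hm⟩
  rw [pathSum, ← sum_filter_not_add_sum_filter _ (m + 1 ∈ ·), hnot,
    sum_pathWeight_filter_succ_mem]
  rfl

end Paths

lemma card_filter_le_orderEmbOfFin (D : Finset ℕ) (i : Fin #D) :
    #(D.filter (· ≤ D.orderEmbOfFin rfl i)) = i + 1 := by
  set e := D.orderEmbOfFin rfl
  have h : D.filter (· ≤ e i) = (Iic i).map e.toEmbedding := by
    ext x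
    simp only [mem_filter, mem_map, mem_Iic, RelEmbedding.coe_toEmbedding]
    constructor
    · rintro ⟨hx, hle⟩
      obtain ⟨j, rfl⟩ : x ∈ Set.range e := by simpa [e] using hx
      exact ⟨j, e.le_iff_le.1 hle, rfl⟩
    · rintro ⟨j, hj, rfl⟩
      exact ⟨orderEmbOfFin_mem D rfl j, e.monotone hj⟩
  rw [h, card_map, Fin.card_Iic]

lemma prod_Icc_ht_eq_prod_downStepHeight {M : Type*} [CommMonoid M] (D : Finset ℕ)
    (f : ℕ → M) : ∏ i ∈ Icc 1 #D, f (ht D i) = ∏ d ∈ D, f (downStepHeight D d) := by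
  set e := D.orderEmbOfFin rfl
  have hdstep (i : Fin #D) : dstep D (i + 1) = e i := by
    rw [dstep, Nat.add_sub_cancel, List.getD_eq_getElem _ _ (by simp), orderEmbOfFin_apply]
    rfl
  have hD : ∏ d ∈ D, f (downStepHeight D d) = ∏ i, f (downStepHeight D (e i)) := by
    conv_lhs => arg 1; rw [← map_orderEmbOfFin_univ D rfl]
    rw [prod_map]
    rfl
  rw [hD, ← Ico_add_one_right_eq_Icc, ← prod_Ico_add' _ 0 #D 1, ← range_eq_Ico,
    ← Fin.prod_univ_eq_prod_range]
  refine prod_congr rfl fun i _ => congrArg f ?_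
  rw [ht, downStepHeight, hdstep, card_filter_le_orderEmbOfFin]

noncomputable def dyckWeight (h : ℕ) : ℤ[X] := X ^ (h - 1) * qint h

lemma pathSum_dyckWeight_odd (a : ℕ)
    (heven : ∀ b, pathSum dyckWeight (2 * a) (2 * b) =
      gaussBinom (X ^ 2) a b * ∏ j ∈ Ico b a, qint (2 * j + 1)) (b : ℕ) :
    pathSum dyckWeight (2 * a + 1) (2 * b + 1) =
      gaussBinom (X ^ 2) a b * ∏ j ∈ Ico (b + 1) (a + 1), qint (2 * j + 1) := by
  rw [pathSum_succ_succ, heven, show 2 * b + 2 = 2 * (b + 1) by ring, heven]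
  simp only [dyckWeight, show 2 * (b + 1) - 1 = 2 * b + 1 by omega]
  rcases lt_or_ge b a with hba | hab
  · rw [prod_eq_prod_Ico_succ_bot hba, prod_Ico_succ_top (show b + 1 ≤ a from hba)]
    linear_combination -(∏ j ∈ Ico (b + 1) a, qint (2 * j + 1)) *
      gaussBinom_mul_qint_two_mul_add_one a b
  · rw [Ico_eq_empty_of_le hab, Ico_eq_empty_of_le (Nat.succ_le_succ hab),
      gaussBinom_eq_zero_of_lt _ (by omega : a < b + 1)]
    ring

lemma pathSum_dyckWeight_even_succ (a : ℕ)
    (hodd : ∀ b, pathSum dyckWeight (2 * a + 1) (2 * b + 1) =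
      gaussBinom (X ^ 2) a b * ∏ j ∈ Ico (b + 1) (a + 1), qint (2 * j + 1)) (b : ℕ) :
    pathSum dyckWeight (2 * (a + 1)) (2 * b) =
      gaussBinom (X ^ 2) (a + 1) b * ∏ j ∈ Ico b (a + 1), qint (2 * j + 1) := by
  rw [show 2 * (a + 1) = 2 * a + 1 + 1 by ring]
  cases b with
  | zero =>
    rw [pathSum_succ_zero, hodd 0, prod_eq_prod_Ico_succ_bot (Nat.succ_pos a)]
    simp [dyckWeight, qint_one]
  | succ b =>
    rw [show 2 * (b + 1) = 2 * b + 1 + 1 by ring, pathSum_succ_succ, hodd,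
      show 2 * b + 1 + 2 = 2 * (b + 1) + 1 by ring, hodd, gaussBinom_succ_succ]
    simp only [dyckWeight, Nat.add_sub_cancel, pow_mul]
    rcases lt_or_ge b a with hba | hab
    · rw [prod_eq_prod_Ico_succ_bot (by omega : b + 1 < a + 1)]
      ring
    · rw [gaussBinom_eq_zero_of_lt _ (by omega : a < b + 1)]
      ring

lemma pathSum_dyckWeight_even (a b : ℕ) :
    pathSum dyckWeight (2 * a) (2 * b) =
      gaussBinom (X ^ 2) a b * ∏ j ∈ Ico b a, qint (2 * j + 1) := by
  induction a generalizing b with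
  | zero =>
    cases b with
    | zero => simp [pathSum_zero_zero]
    | succ b =>
      rw [show 2 * (b + 1) = 2 * b + 1 + 1 by ring, pathSum_zero_succ]
      simp
  | succ a ih => exact pathSum_dyckWeight_even_succ a (pathSum_dyckWeight_odd a ih) b

theorem stmt3_general (n : ℕ) :
    ∑ α ∈ dyckPaths (2 * n),
        ∏ i ∈ Finset.Icc 1 n, (Polynomial.X : Polynomial ℤ) ^ (ht α i - 1) * qint (ht α i) =
      ∏ i ∈ Finset.range n, qint (2 * i + 1) := by
  have hweight (α : Finset ℕ) (hα : α ∈ prefixPaths (2 * n) 0) :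
      ∏ i ∈ Icc 1 n, (X : ℤ[X]) ^ (ht α i - 1) * qint (ht α i) = pathWeight dyckWeight α := by
    obtain ⟨-, hcard, -⟩ := mem_prefixPaths.1 hα
    rw [show n = #α by omega]
    exact prod_Icc_ht_eq_prod_downStepHeight α dyckWeight
  rw [dyckPaths_eq_prefixPaths, Finset.sum_congr rfl hweight]
  have h := pathSum_dyckWeight_even n 0
  rw [mul_zero, gaussBinom_zero_right, one_mul, ← range_eq_Ico] at h
  exact h

/-- `∑_{α ∈ D_{2n}} ∏_{i=1}^n q^{h_i(α)-1}[h_i(α)]_q = [1]_q[3]_q⋯[2n-1]_q`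
as polynomials in `ℤ[q]`. -/
theorem stmt3 (n : ℕ) (hn : 1 ≤ n) :
    ∑ α ∈ dyckPaths (2 * n),
        ∏ i ∈ Finset.Icc 1 n, (Polynomial.X : Polynomial ℤ) ^ (ht α i - 1) * qint (ht α i) =
      ∏ i ∈ Finset.range n, qint (2 * i + 1) :=
  stmt3_general n
end

section
/- Define the crossout marking of a permutation w of {1,...,2n}: repeatedly, alternately mark 'B' below the position of the smallest unmarked value of w, and then mark 'A' below the leftmost unmarked position, until all positions are marked. Then w has no BA inversions: there is no pair of positions i < j with w(i) > w(j) such that i is marked B and j is marked A. -/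
open Finset

theorem key {N : ℕ} (w : Equiv.Perm (Fin N)) (k : ℕ) :
    (∀ i ∈ (crossout w k).2, ∀ j : Fin N, j ∉ (crossout w k).1 → j ∉ (crossout w k).2 → w i < w j) ∧
    (∀ a ∈ (crossout w k).1, ∀ j : Fin N, j ∉ (crossout w k).1 → j ∉ (crossout w k).2 → a < j) ∧
    (∀ i ∈ (crossout w k).2, ∀ a ∈ (crossout w k).1, i < a → w i < w a) := by
  induction k with
  | zero => simp [crossout]
  | succ k ih =>
    obtain ⟨L1, L2, L3⟩ := ih
    set p := crossout w k with hp
    set u := (Finset.univ : Finset (Fin N)) \ (p.1 ∪ p.2) with hudef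
    have hmemu : ∀ x : Fin N, x ∈ u ↔ x ∉ p.1 ∧ x ∉ p.2 := by
      intro x; simp [hudef, not_or]
    by_cases hu : u.Nonempty
    · set b := w.symm ((u.image w).min' (hu.image _)) with hbdef
      have hwb : w b = (u.image w).min' (hu.image _) := by rw [hbdef]; simp
      have hbu : b ∈ u := by
        obtain ⟨x, hx, hxe⟩ := Finset.mem_image.mp ((u.image w).min'_mem (hu.image _))
        have : b = x := w.injective (by rw [hwb, hxe])
        rwa [this]
      have hbmin : ∀ x ∈ u, x ≠ b → w b < w x := by
        intro x hx hxb
        have h2 : w b ≤ w x := hwb ▸ Finset.min'_le _ _ (Finset.mem_image_of_mem _ hx)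
        exact lt_of_le_of_ne h2 (fun h => hxb (w.injective h.symm))
      have hck : crossout w (k + 1) =
          (if hu : u.Nonempty then
            if ha : (u.erase (w.symm ((u.image w).min' (hu.image _)))).Nonempty then
              (insert ((u.erase (w.symm ((u.image w).min' (hu.image _)))).min' ha) p.1,
                insert (w.symm ((u.image w).min' (hu.image _))) p.2)
            else (p.1, insert (w.symm ((u.image w).min' (hu.image _))) p.2)
          else p) := by
        rw [crossout]
      rw [hck, dif_pos hu]
      by_cases ha : (u.erase b).Nonempty
      · rw [dif_pos ha]
        set a := (u.erase b).min' ha with hadef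
        have hae : a ∈ u.erase b := (u.erase b).min'_mem ha
        have hau : a ∈ u := Finset.mem_of_mem_erase hae
        have hab : a ≠ b := Finset.ne_of_mem_erase hae
        have hamin : ∀ x ∈ u, x ≠ b → a ≤ x := by
          intro x hx hxb
          exact Finset.min'_le _ _ (Finset.mem_erase.mpr ⟨hxb, hx⟩)
        refine ⟨?_, ?_, ?_⟩
        · intro i hi j hj1 hj2
          simp only [Finset.mem_insert] at hi hj1 hj2
          push_neg at hj1 hj2
          have hju : j ∈ u := (hmemu j).mpr ⟨hj1.2, hj2.2⟩
          rcases hi with rfl | hi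
          · exact hbmin j hju hj2.1
          · exact L1 i hi j hj1.2 hj2.2
        · intro a' ha' j hj1 hj2
          simp only [Finset.mem_insert] at ha' hj1 hj2
          push_neg at hj1 hj2
          have hju : j ∈ u := (hmemu j).mpr ⟨hj1.2, hj2.2⟩
          rcases ha' with rfl | ha'
          · exact lt_of_le_of_ne (hamin j hju hj2.1) (Ne.symm hj1.1)
          · exact L2 a' ha' j hj1.2 hj2.2
        · intro i hi a' ha' hlt
          simp only [Finset.mem_insert] at hi ha'
          rcases hi with rfl | hi <;> rcases ha' with rfl | ha'
          · exact hbmin a hau hab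
          · exact absurd hlt (not_lt.mpr (le_of_lt (L2 a' ha' b ((hmemu b).mp hbu).1 ((hmemu b).mp hbu).2)))
          · exact L1 i hi a ((hmemu a).mp hau).1 ((hmemu a).mp hau).2
          · exact L3 i hi a' ha' hlt
      · rw [dif_neg ha]
        have hsub : ∀ x ∈ u, x = b := by
          intro x hx
          by_contra hne
          exact ha ⟨x, Finset.mem_erase.mpr ⟨hne, hx⟩⟩
        refine ⟨?_, ?_, ?_⟩
        · intro i hi j hj1 hj2
          simp only [Finset.mem_insert] at hj2
          push_neg at hj2
          exact absurd (hsub j ((hmemu j).mpr ⟨hj1, hj2.2⟩)) hj2.1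
        · intro a' ha' j hj1 hj2
          simp only [Finset.mem_insert] at hj2
          push_neg at hj2
          exact absurd (hsub j ((hmemu j).mpr ⟨hj1, hj2.2⟩)) hj2.1
        · intro i hi a' ha' hlt
          simp only [Finset.mem_insert] at hi
          rcases hi with rfl | hi
          · exact absurd hlt (not_lt.mpr (le_of_lt (L2 a' ha' b ((hmemu b).mp hbu).1 ((hmemu b).mp hbu).2)))
          · exact L3 i hi a' ha' hlt
    · have hck : crossout w (k + 1) = p := by
        rw [crossout]
        simp only [← hp, ← hudef, dif_neg hu]
      rw [hck]
      exact ⟨L1, L2, L3⟩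


/-- the crossout marking produces no BA inversions: there is no pair of
positions `i < j` with `w i > w j`, `i` marked B and `j` marked A. -/
theorem stmt4 (n : ℕ) (w : Equiv.Perm (Fin (2 * n))) :
    ¬ ∃ i j : Fin (2 * n), i < j ∧ w j < w i ∧ i ∈ markB w ∧ j ∈ markA w := by
  rintro ⟨i, j, hij, hw, hiB, hjA⟩
  exact absurd ((key w (2 * n)).2.2 i hiB j hjA hij) (not_lt.mpr (le_of_lt hw))
end

section
/- Let A(w) ⊂ {1,...,2n} be the set of positions marked A under the crossout marking of a permutation w of {1,...,2n}. Then the set {w(a) : a ∈ A(w)}, viewed as the set of down steps of a lattice path of length 2n (steps at positions in the set are down steps (1,-1), others are up steps (1,1)), yields a Dyck path, i.e., a path from (0,0) to (2n,0) staying weakly above the x-axis. -/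
open Finset

lemma crossout_spec (n : ℕ) (w : Equiv.Perm (Fin (2 * n))) (k : ℕ) :
    Disjoint (crossout w k).1 (crossout w k).2 ∧
    (crossout w k).1.card = min k n ∧ (crossout w k).2.card = min k n ∧
    ∀ t : ℕ, ((crossout w k).1.filter (fun a => (w a).val < t)).card ≤
      ((crossout w k).2.filter (fun b => (w b).val < t)).card := by
  induction k with
  | zero => simp [crossout]
  | succ k ih =>
    obtain ⟨hdisj, hA, hB, hcount⟩ := ih
    set p := crossout w k with hp
    set u := (Finset.univ : Finset (Fin (2 * n))) \ (p.1 ∪ p.2) with hu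
    have hucard : u.card = 2 * n - 2 * min k n := by
      rw [hu, Finset.card_sdiff_of_subset (Finset.subset_univ _), Finset.card_univ, Fintype.card_fin,
        Finset.card_union_of_disjoint hdisj, hA, hB]
      omega
    by_cases hk : k < n
    · have hmin : min k n = k := min_eq_left hk.le
      have hucard2 : 2 ≤ u.card := by omega
      have hune : u.Nonempty := Finset.card_pos.mp (by omega)
      set b := w.symm ((u.image w).min' (hune.image _)) with hb
      have hbu : b ∈ u := by
        have hmem : (u.image w).min' (hune.image _) ∈ u.image w :=
          Finset.min'_mem _ _
        obtain ⟨x, hx, hxe⟩ := Finset.mem_image.mp hmem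
        rwa [hb, ← hxe, Equiv.symm_apply_apply]
      have hbmin : ∀ x ∈ u, w b ≤ w x := by
        intro x hx
        rw [hb, Equiv.apply_symm_apply]
        exact Finset.min'_le _ _ (Finset.mem_image_of_mem _ hx)
      have hane : (u.erase b).Nonempty := by
        rw [← Finset.card_pos, Finset.card_erase_of_mem hbu]; omega
      set a := (u.erase b).min' hane with ha
      have hau' : a ∈ u.erase b := Finset.min'_mem _ _
      have hau : a ∈ u := Finset.mem_of_mem_erase hau'
      have hab : a ≠ b := Finset.ne_of_mem_erase hau'
      have hco : crossout w (k + 1) = (insert a p.1, insert b p.2) := by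
        rw [crossout]
        rw [dif_pos hune, dif_pos hane]
      have haP1 : a ∉ p.1 := fun h => (Finset.mem_sdiff.mp hau).2 (Finset.mem_union_left _ h)
      have haP2 : a ∉ p.2 := fun h => (Finset.mem_sdiff.mp hau).2 (Finset.mem_union_right _ h)
      have hbP1 : b ∉ p.1 := fun h => (Finset.mem_sdiff.mp hbu).2 (Finset.mem_union_left _ h)
      have hbP2 : b ∉ p.2 := fun h => (Finset.mem_sdiff.mp hbu).2 (Finset.mem_union_right _ h)
      rw [hco]
      refine ⟨?_, ?_, ?_, ?_⟩
      · rw [Finset.disjoint_left]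
        intro x hx hx2
        simp only [Finset.mem_insert] at hx hx2
        rcases hx with rfl | hx
        · rcases hx2 with h | h
          · exact hab h
          · exact haP2 h
        · rcases hx2 with rfl | h
          · exact hbP1 hx
          · exact Finset.disjoint_left.mp hdisj hx h
      · rw [Finset.card_insert_of_notMem haP1, hA]; omega
      · rw [Finset.card_insert_of_notMem hbP2, hB]; omega
      · intro t
        rw [Finset.filter_insert, Finset.filter_insert]
        by_cases hat : (w a).val < t
        · have hbt : (w b).val < t := lt_of_le_of_lt (hbmin a hau) hat
          rw [if_pos hat, if_pos hbt,
            Finset.card_insert_of_notMem (fun h => haP1 (Finset.mem_filter.mp h).1),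
            Finset.card_insert_of_notMem (fun h => hbP2 (Finset.mem_filter.mp h).1)]
          exact Nat.succ_le_succ (hcount t)
        · rw [if_neg hat]
          refine (hcount t).trans ?_
          split
          · exact Finset.card_le_card (Finset.subset_insert _ _)
          · exact le_refl _
    · have hmin : min k n = n := min_eq_right (not_lt.mp hk)
      have hucard0 : u.card = 0 := by omega
      have hue : ¬ u.Nonempty := by
        rw [Finset.not_nonempty_iff_eq_empty, ← Finset.card_eq_zero]; exact hucard0
      have hco : crossout w (k + 1) = p := by
        rw [crossout]; rw [dif_neg hue]
      rw [hco]
      have : min (k + 1) n = min k n := by omega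
      rw [this]
      exact ⟨hdisj, hA, hB, hcount⟩

lemma pA_inj {n : ℕ} (w : Equiv.Perm (Fin (2 * n))) :
    Function.Injective (fun a : Fin (2 * n) => (w a).val + 1) := by
  intro x y h
  exact w.injective (Fin.val_injective (Nat.succ_injective h))

/-- the values at the positions marked A form the down-step set of a
Dyck path of length `2n`. -/
theorem stmt7 (n : ℕ) (w : Equiv.Perm (Fin (2 * n))) :
    IsDyck (2 * n) (pAset w) := by
  obtain ⟨hdisj, hA, hB, hcount⟩ := crossout_spec n w (2 * n)
  have hmin : min (2 * n) n = n := by omega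
  refine ⟨?_, ?_, ?_⟩
  · intro x hx
    obtain ⟨a, _, rfl⟩ := Finset.mem_image.mp hx
    have := (w a).isLt
    simp only [Finset.mem_Icc]; omega
  · rw [pAset, Finset.card_image_of_injective _ (pA_inj w)]
    rw [markA, hA, hmin]
  · intro k hk
    have hfil : (pAset w).filter (· ≤ k) =
        ((markA w).filter (fun a => (w a).val < k)).image (fun a => (w a).val + 1) := by
      ext x
      simp only [pAset, Finset.mem_filter, Finset.mem_image]
      constructor
      · rintro ⟨⟨a, ha, rfl⟩, hle⟩
        exact ⟨a, ⟨ha, by omega⟩, rfl⟩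
      · rintro ⟨a, ⟨ha, hlt⟩, rfl⟩
        exact ⟨⟨a, ha, rfl⟩, by omega⟩
    have hAcard : ((pAset w).filter (· ≤ k)).card =
        ((markA w).filter (fun a => (w a).val < k)).card := by
      rw [hfil, Finset.card_image_of_injective _ (pA_inj w)]
    have hAB := hcount k
    set Af := (markA w).filter (fun a => (w a).val < k) with hAf
    set Bf := (markB w).filter (fun b => (w b).val < k) with hBf
    have hdisjf : Disjoint Af Bf := Finset.disjoint_filter_filter hdisj
    have hunion : (Af ∪ Bf).card ≤ k := by
      have := Finset.card_le_card_of_injOn (s := Af ∪ Bf) (fun x => (w x).val) (t := Finset.range k)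
        (fun x hx => by
          rcases Finset.mem_union.mp hx with h | h
          · exact Finset.mem_range.mpr (Finset.mem_filter.mp h).2
          · exact Finset.mem_range.mpr (Finset.mem_filter.mp h).2)
        (fun x _ y _ h => w.injective (Fin.val_injective h))
      simpa using this
    rw [Finset.card_union_of_disjoint hdisjf] at hunion
    have : Af.card ≤ Bf.card := hAB
    omega
end

section
/- Let B(w) ⊂ {1,...,2n} be the set of positions marked B under the crossout marking of a permutation w of {1,...,2n}. Then the set {b+1 : b ∈ B(w)} ∪ {2n+2} is the set of down steps of a Dyck path of length 2n+2. -/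
open Finset

lemma crossout_master (n : ℕ) (w : Equiv.Perm (Fin (2*n))) :
    ∀ k, k ≤ n →
    Disjoint (crossout w k).1 (crossout w k).2 ∧
    (crossout w k).1.card = k ∧ (crossout w k).2.card = k ∧
    ∀ m : ℕ,
      ((crossout w k).2.filter (fun x => x.val ≤ m)).card
        ≤ ((crossout w k).1.filter (fun x => x.val ≤ m)).card + 1 ∧
      (((crossout w k).2.filter (fun x => x.val ≤ m)).card
          = ((crossout w k).1.filter (fun x => x.val ≤ m)).card + 1 →
        ∀ x : Fin (2*n), x.val ≤ m → x ∈ (crossout w k).1 ∪ (crossout w k).2) := by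
  intro k
  induction k with
  | zero =>
    intro _
    refine ⟨by simp [crossout], by simp [crossout], by simp [crossout], fun m => ?_⟩
    simp [crossout]
  | succ k ih =>
    intro hk
    obtain ⟨hdisj, hA, hB, hpre⟩ := ih (Nat.le_of_succ_le hk)
    set A := (crossout w k).1 with hAdef
    set B := (crossout w k).2 with hBdef
    set u : Finset (Fin (2*n)) := Finset.univ \ (A ∪ B) with hudef
    have hucard : u.card = 2*n - 2*k := by
      rw [hudef, Finset.card_sdiff_of_subset (Finset.subset_univ _), Finset.card_univ,
        Finset.card_union_of_disjoint hdisj, hA, hB, Fintype.card_fin]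
      omega
    have hu : u.Nonempty := Finset.card_pos.mp (by omega)
    set b := w.symm ((u.image w).min' (hu.image _)) with hbdef
    have hbu : b ∈ u := by
      have h := Finset.min'_mem (u.image w) (hu.image _)
      obtain ⟨x, hx, hxe⟩ := Finset.mem_image.mp h
      rw [hbdef, ← hxe]
      simpa using hx
    have ha : (u.erase b).Nonempty := by
      rw [← Finset.card_pos, Finset.card_erase_of_mem hbu]
      omega
    set a := (u.erase b).min' ha with hadef
    have hau : a ∈ u.erase b := Finset.min'_mem _ ha
    have hab : a ≠ b := (Finset.mem_erase.mp hau).1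
    have hauu : a ∈ u := (Finset.mem_erase.mp hau).2
    have haAB : a ∉ A ∪ B := by
      have := Finset.mem_sdiff.mp (hudef ▸ hauu)
      exact this.2
    have hbAB : b ∉ A ∪ B := (Finset.mem_sdiff.mp (hudef ▸ hbu)).2
    have haA : a ∉ A := fun h => haAB (Finset.mem_union_left _ h)
    have haB : a ∉ B := fun h => haAB (Finset.mem_union_right _ h)
    have hbA : b ∉ A := fun h => hbAB (Finset.mem_union_left _ h)
    have hbB : b ∉ B := fun h => hbAB (Finset.mem_union_right _ h)
    have hco : crossout w (k+1) = (insert a A, insert b B) := by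
      rw [crossout]
      simp only [← hAdef, ← hBdef, ← hudef]
      rw [dif_pos hu, dif_pos ha]
    rw [hco]
    refine ⟨?_, ?_, ?_, ?_⟩
    · rw [Finset.disjoint_insert_left, Finset.disjoint_insert_right]
      exact ⟨by simp [hab, haB], hbA, hdisj⟩
    · rw [Finset.card_insert_of_notMem haA, hA]
    · rw [Finset.card_insert_of_notMem hbB, hB]
    · intro m
      obtain ⟨h1, h2⟩ := hpre m
      have hBf : ((insert b B).filter (fun x => x.val ≤ m)).card =
          (B.filter (fun x => x.val ≤ m)).card + (if b.val ≤ m then 1 else 0) := by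
        rw [Finset.filter_insert]
        split
        · rw [Finset.card_insert_of_notMem (fun h => hbB (Finset.mem_filter.mp h).1)]
        · rfl
      have hAf : ((insert a A).filter (fun x => x.val ≤ m)).card =
          (A.filter (fun x => x.val ≤ m)).card + (if a.val ≤ m then 1 else 0) := by
        rw [Finset.filter_insert]
        split
        · rw [Finset.card_insert_of_notMem (fun h => haA (Finset.mem_filter.mp h).1)]
        · rfl
      rw [hBf, hAf]
      by_cases hbm : b.val ≤ m <;> by_cases ham : a.val ≤ m <;>
        simp only [hbm, ham, if_pos, if_neg, if_true, if_false]
      · constructor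
        · omega
        · intro he x hx
          have := h2 (by omega) x hx
          rw [Finset.mem_union] at this ⊢
          rcases this with h | h
          · exact Or.inl (Finset.mem_insert_of_mem h)
          · exact Or.inr (Finset.mem_insert_of_mem h)
      · have hle : (B.filter (fun x => x.val ≤ m)).card
            ≤ (A.filter (fun x => x.val ≤ m)).card := by
          by_contra hcon
          have heq : (B.filter (fun x => x.val ≤ m)).card
              = (A.filter (fun x => x.val ≤ m)).card + 1 := by omega
          exact hbAB (h2 heq b hbm)
        constructor
        · omega
        · intro _ x hx
          rw [Finset.mem_union]
          by_cases hxb : x = b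
          · exact Or.inr (hxb ▸ Finset.mem_insert_self _ _)
          · by_cases hxAB : x ∈ A ∪ B
            · rw [Finset.mem_union] at hxAB
              rcases hxAB with h | h
              · exact Or.inl (Finset.mem_insert_of_mem h)
              · exact Or.inr (Finset.mem_insert_of_mem h)
            · exfalso
              have hxu : x ∈ u := by
                rw [hudef, Finset.mem_sdiff]
                exact ⟨Finset.mem_univ _, hxAB⟩
              have hxe : x ∈ u.erase b := Finset.mem_erase.mpr ⟨hxb, hxu⟩
              have := Finset.min'_le _ x hxe
              rw [← hadef] at this
              exact ham (le_trans (Fin.le_def.mp this) hx)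
      · exact ⟨by omega, by omega⟩
      · constructor
        · omega
        · intro he x hx
          have := h2 (by omega) x hx
          rw [Finset.mem_union] at this ⊢
          rcases this with h | h
          · exact Or.inl (Finset.mem_insert_of_mem h)
          · exact Or.inr (Finset.mem_insert_of_mem h)

lemma crossout_union_univ (n : ℕ) (w : Equiv.Perm (Fin (2*n))) :
    (crossout w n).1 ∪ (crossout w n).2 = Finset.univ := by
  obtain ⟨hd, hA, hB, -⟩ := crossout_master n w n le_rfl
  apply Finset.eq_univ_of_card
  rw [Finset.card_union_of_disjoint hd, hA, hB, Fintype.card_fin]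
  omega

lemma crossout_stable (n : ℕ) (w : Equiv.Perm (Fin (2*n))) :
    ∀ k, n ≤ k → crossout w k = crossout w n := by
  intro k
  induction k with
  | zero =>
    intro h
    have hn : n = 0 := Nat.le_zero.mp h
    subst hn
    rfl
  | succ k ih =>
    intro h
    rcases Nat.eq_or_lt_of_le h with h' | h'
    · rw [← h']
    · have hk : n ≤ k := by omega
      have heq := ih hk
      rw [crossout]
      simp only [heq, crossout_union_univ, Finset.sdiff_self]
      rw [dif_neg (by simp)]

lemma markB_eq' (n : ℕ) (w : Equiv.Perm (Fin (2*n))) :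
    markB w = (crossout w n).2 := by
  rw [markB, crossout_stable n w (2*n) (by omega)]

lemma card_filter_val_le (N m : ℕ) (hm : m < N) :
    ((Finset.univ : Finset (Fin N)).filter (fun x => x.val ≤ m)).card = m + 1 := by
  have himg : ((Finset.univ : Finset (Fin N)).filter (fun x => x.val ≤ m)).image Fin.val
      = Finset.range (m+1) := by
    ext j
    simp only [Finset.mem_image, Finset.mem_filter, Finset.mem_univ, true_and,
      Finset.mem_range, Nat.lt_succ_iff]
    constructor
    · rintro ⟨x, hx, rfl⟩; exact hx
    · intro hj; exact ⟨⟨j, by omega⟩, hj, rfl⟩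
  rw [← Finset.card_image_of_injective _ Fin.val_injective, himg, Finset.card_range]


/-- `{b + 1 : b marked B} ∪ {2n + 2}` is the down-step set of a Dyck path
of length `2n + 2`. -/
theorem stmt8 (n : ℕ) (w : Equiv.Perm (Fin (2 * n))) :
    IsDyck (2 * n + 2) (pBset w) := by
  have hinj : Function.Injective (fun b : Fin (2*n) => b.val + 2) := by
    intro x y h
    have h' : x.val + 2 = y.val + 2 := h
    exact Fin.val_injective (by omega)
  have hmB : markB w = (crossout w n).2 := markB_eq' n w
  obtain ⟨hd, hAc, hBc, hpre⟩ := crossout_master n w n le_rfl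
  have hBcard : (markB w).card = n := by rw [hmB, hBc]
  have hnotin : (2*n + 2) ∉ (markB w).image (fun b => b.val + 2) := by
    intro h
    obtain ⟨b, -, hb⟩ := Finset.mem_image.mp h
    have := b.isLt
    omega
  have hcard : (pBset w).card = n + 1 := by
    rw [pBset, Finset.card_insert_of_notMem hnotin,
      Finset.card_image_of_injective _ hinj, hBcard]
  refine ⟨?_, ?_, ?_⟩
  · intro x hx
    rw [pBset, Finset.mem_insert] at hx
    rcases hx with rfl | hx
    · exact Finset.mem_Icc.mpr ⟨by omega, le_rfl⟩
    · obtain ⟨b, -, rfl⟩ := Finset.mem_image.mp hx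
      have := b.isLt
      exact Finset.mem_Icc.mpr ⟨by omega, by omega⟩
  · rw [hcard]; ring
  · intro k hk
    rcases Nat.eq_or_lt_of_le hk with hke | hklt
    · have : (pBset w).filter (· ≤ k) = pBset w := by
        apply Finset.filter_true_of_mem
        intro x hx
        rw [pBset, Finset.mem_insert] at hx
        rcases hx with rfl | hx
        · omega
        · obtain ⟨b, -, rfl⟩ := Finset.mem_image.mp hx
          have := b.isLt
          show Fin.val b + 2 ≤ k
          omega
      rw [this, hcard]
      omega
    · rw [pBset, Finset.filter_insert, if_neg (by omega), Finset.filter_image]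
      rw [Finset.card_image_of_injective _ hinj]
      by_cases hk2 : k < 2
      · have : (markB w).filter (fun b => (fun b : Fin (2*n) => b.val + 2) b ≤ k) = ∅ := by
          apply Finset.filter_false_of_mem
          intro b _
          show ¬ (Fin.val b + 2 ≤ k)
          omega
        rw [this]
        simp
      · set m := k - 2 with hm
        have hmlt : m < 2*n := by omega
        have hfe : (markB w).filter (fun b => (fun b : Fin (2*n) => b.val + 2) b ≤ k)
            = (crossout w n).2.filter (fun x => x.val ≤ m) := by
          rw [hmB]
          apply Finset.filter_congr
          intro x _
          show Fin.val x + 2 ≤ k ↔ Fin.val x ≤ m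
          omega
        rw [hfe]
        have hunion : ((crossout w n).1.filter (fun x => x.val ≤ m))
            ∪ ((crossout w n).2.filter (fun x => x.val ≤ m))
            = (Finset.univ : Finset (Fin (2*n))).filter (fun x => x.val ≤ m) := by
          rw [← Finset.filter_union, crossout_union_univ]
        have hdf : Disjoint ((crossout w n).1.filter (fun x => x.val ≤ m))
            ((crossout w n).2.filter (fun x => x.val ≤ m)) :=
          Finset.disjoint_filter_filter hd
        have hsum : ((crossout w n).1.filter (fun x => x.val ≤ m)).card
            + ((crossout w n).2.filter (fun x => x.val ≤ m)).card = m + 1 := by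
          rw [← Finset.card_union_of_disjoint hdf, hunion, card_filter_val_le _ _ hmlt]
        have := (hpre m).1
        omega
end

section
/- Fix a Dyck path β of length 2n+2. The number of permutations w of {1,...,2n} whose crossout B-path p_B(w) equals β is 1·3·5···(2n-1) · ∏_{i=1}^n h_i*(β). -/
open Finset

/-!
Record the positions marked `B` in the order in which they get marked: a schedule `τ`. Once `τ`
is fixed the crossout is deterministic, and `w` produces `τ` iff in every round `k` the position
`τ k` carries the smallest value of `w` among the `2n - 2k` unmarked positions. Swapping values at
two unmarked positions preserves the earlier rounds, so round `k` cuts the number of permutations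
by the factor `2n - 2k`; hence every admissible schedule is produced by
`(2n)! / ∏ (2n - 2k) = 1·3⋯(2n-1)` permutations.

With the set `B` of `B`-marks fixed, the `A`-marks are forced to be the positions outside `B`
from left to right, and the schedule is admissible iff the `i`-th position `b_i` of `B` is marked
by round `D_i = min(#{c ∉ B | c < b_i}, n - 1)`. Since `D` is monotone there are
`∏ (D_i + 1 - i)` such schedules, and `D_i + 1 - i = h*_{i+1}(β)`.
-/

open Finset Equiv

namespace Finset

variable {α : Type*} [LinearOrder α] {s : Finset α} {m : ℕ} (h : #s = m)

lemma card_filter_lt_orderEmbOfFin (i : Fin m) : #{x ∈ s | x < s.orderEmbOfFin h i} = i := by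
  have key : {x ∈ s | x < s.orderEmbOfFin h i} =
      ({j | j < i} : Finset (Fin m)).image (s.orderEmbOfFin h) := by
    ext x
    simp only [mem_filter, mem_image, mem_univ, true_and]
    constructor
    · rintro ⟨hx, hlt⟩
      obtain ⟨j, rfl⟩ : x ∈ Set.range (s.orderEmbOfFin h) := by simpa using hx
      exact ⟨j, (s.orderEmbOfFin h).lt_iff_lt.mp hlt, rfl⟩
    · rintro ⟨j, hj, rfl⟩
      exact ⟨orderEmbOfFin_mem s h j, (s.orderEmbOfFin h).lt_iff_lt.mpr hj⟩
  rw [key, card_image_of_injective _ (s.orderEmbOfFin h).injective, filter_gt_eq_Iio,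
    Fin.card_Iio]

lemma orderEmbOfFin_lt_iff (i : Fin m) (x : α) :
    s.orderEmbOfFin h i < x ↔ (i : ℕ) < #{y ∈ s | y < x} := by
  rw [← card_filter_lt_orderEmbOfFin h i]
  constructor
  · intro hx
    refine card_lt_card ⟨fun y => ?_, fun hsub => ?_⟩
    · simpa only [mem_filter] using fun ⟨hy, hlt⟩ => ⟨hy, hlt.trans hx⟩
    · simpa using hsub (mem_filter.mpr ⟨orderEmbOfFin_mem s h i, hx⟩)
  · intro hcard
    by_contra! hx
    refine hcard.not_ge (card_le_card fun y => ?_)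
    simpa only [mem_filter] using fun ⟨hy, hlt⟩ => ⟨hy, hlt.trans_le hx⟩

lemma lt_orderEmbOfFin_iff (k : Fin m) {x : α} (hx : x ∉ s) :
    x < s.orderEmbOfFin h k ↔ #{y ∈ s | y < x} ≤ k := by
  have hne : s.orderEmbOfFin h k ≠ x := fun he => hx (he ▸ orderEmbOfFin_mem s h k)
  rw [← not_lt, ← orderEmbOfFin_lt_iff h, not_lt, lt_iff_le_and_ne]
  exact and_iff_left hne.symm

lemma orderEmbOfFin_eq_of_card_filter_lt {x : α} (hx : x ∈ s) {j : ℕ} (hj : j < m)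
    (hcard : #{y ∈ s | y < x} = j) : s.orderEmbOfFin h ⟨j, hj⟩ = x := by
  obtain ⟨i, rfl⟩ : x ∈ Set.range (s.orderEmbOfFin h) := by simpa using hx
  rw [card_filter_lt_orderEmbOfFin] at hcard
  subst hcard
  rfl

end Finset

lemma prod_range_odd_mul_prod_range_even (n : ℕ) :
    (∏ i ∈ range n, (2 * i + 1)) * ∏ k ∈ range n, (2 * n - 2 * k) = (2 * n).factorial := by
  rw [← prod_range_reflect (fun k => 2 * n - 2 * k), ← prod_mul_distrib,
    prod_congr rfl fun i hi => show (2 * i + 1) * (2 * n - 2 * (n - 1 - i)) =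
      (2 * i + 1) * (2 * i + 2) by rw [mem_range] at hi; congr 1; omega]
  induction n with
  | zero => simp
  | succ n ih =>
    rw [prod_range_succ, ih, show 2 * (n + 1) = 2 * n + 1 + 1 by ring, Nat.factorial_succ,
      Nat.factorial_succ]
    ring

section PermCount

lemma swap_apply_mem {α : Type*} [DecidableEq α] {s : Finset α} {u v x : α} (hu : u ∈ s)
    (hv : v ∈ s) (hx : x ∈ s) : swap u v x ∈ s := by
  rw [swap_apply_def]
  split_ifs <;> assumption

lemma card_filter_forall_apply_lt_mul_card {N : ℕ} (P : Perm (Fin N) → Prop) [DecidablePred P]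
    {V : Finset (Fin N)} {t : Fin N} (ht : t ∈ V)
    (hP : ∀ u ∈ V, ∀ v ∈ V, ∀ w, P w → P (w * swap u v)) :
    #{w | P w ∧ ∀ x ∈ V, x ≠ t → w t < w x} * #V = #{w | P w} := by
  set F : Fin N → Finset (Perm (Fin N)) :=
    fun m => {w | P w ∧ ∀ x ∈ V, x ≠ m → w m < w x} with hF
  have hmove : ∀ m ∈ V, ∀ m' ∈ V, ∀ w ∈ F m, w * swap m m' ∈ F m' := by
    intro m hm m' hm' w hw
    simp only [hF, mem_filter, mem_univ, true_and] at hw ⊢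
    refine ⟨hP m hm m' hm' w hw.1, fun x hx hxm' => ?_⟩
    rw [Perm.mul_apply, Perm.mul_apply, swap_apply_right]
    exact hw.2 _ (swap_apply_mem hm hm' hx) (by rwa [Ne, swap_apply_eq_iff, swap_apply_left])
  have hcard : ∀ m ∈ V, #(F m) = #(F t) := fun m hm =>
    card_nbij' (· * swap m t) (· * swap t m) (hmove m hm t ht) (hmove t ht m hm)
      (fun w _ => by simp [mul_assoc, swap_comm t m])
      (fun w _ => by simp [mul_assoc, swap_comm t m])
  have hcover : ({w | P w} : Finset (Perm (Fin N))) = V.biUnion F := by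
    ext w
    simp only [hF, mem_filter, mem_biUnion, mem_univ, true_and]
    refine ⟨fun hw => ?_, fun ⟨_, _, hw, _⟩ => hw⟩
    obtain ⟨m, hm, hmin⟩ := V.exists_min_image w ⟨t, ht⟩
    exact ⟨m, hm, hw, fun x hx hxm => (hmin x hx).lt_of_ne (w.injective.ne hxm.symm)⟩
  have hdisj : (V : Set (Fin N)).PairwiseDisjoint F := by
    intro m _ m' _ hmm'
    refine disjoint_left.mpr fun w hw hw' => ?_
    simp only [hF, mem_filter, mem_univ, true_and] at hw hw'
    exact (hw.2 m' (by assumption) hmm'.symm).not_gt (hw'.2 m (by assumption) hmm')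
  rw [hcover, card_biUnion hdisj, sum_congr rfl hcard, sum_const, smul_eq_mul, mul_comm]

lemma val_swap_zero_succ_le_iff {m : ℕ} {p : Fin (m + 1)} {v : Fin m} {d : ℕ}
    (hp : (p : ℕ) ≤ d) (hd : 1 ≤ d) :
    ((swap 0 p v.succ : Fin (m + 1)) : ℕ) ≤ d ↔ (v : ℕ) ≤ d - 1 := by
  rw [swap_apply_def, if_neg (Fin.succ_ne_zero v)]
  split_ifs with hvp
  · have hv : (v : ℕ) + 1 = p := by rw [← hvp, Fin.val_succ]
    simp only [Fin.val_zero, zero_le, true_iff]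
    omega
  · simp only [Fin.val_succ]
    omega

lemma card_perm_forall_apply_le_of_le : ∀ {m : ℕ} (D : Fin m → ℕ), Monotone D →
    (∀ i : Fin m, (i : ℕ) ≤ D i) → (∀ i, D i < m) →
    #{σ : Perm (Fin m) | ∀ i, (σ i : ℕ) ≤ D i} = ∏ i, (D i + 1 - i)
  | 0, _, _, _, _ => by simp
  | m + 1, D, hmono, hlow, hlt => by
    have hpos (x : Fin m) : 1 ≤ D x.succ := by
      have := hlow x.succ
      rw [Fin.val_succ] at this
      omega
    have hsplit : ∀ q : Fin (m + 1) × Perm (Fin m),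
        (∀ i, (Perm.decomposeFin.symm q i : ℕ) ≤ D i) ↔
          q ∈ ({p | (p : ℕ) ≤ D 0} : Finset (Fin (m + 1))) ×ˢ
            ({e | ∀ x, (e x : ℕ) ≤ D x.succ - 1} : Finset (Perm (Fin m))) := by
      rintro ⟨p, e⟩
      simp only [mem_product, mem_filter, mem_univ, true_and, Fin.forall_fin_succ,
        Perm.decomposeFin_symm_apply_zero, Perm.decomposeFin_symm_apply_succ]
      exact and_congr_right fun hp => forall_congr' fun x =>
        val_swap_zero_succ_le_iff (hp.trans (hmono (Fin.zero_le _))) (hpos x)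
    rw [← card_equiv Perm.decomposeFin.symm fun q => by
        simp only [mem_filter, mem_univ, true_and]; exact (hsplit q).symm, card_product,
      card_perm_forall_apply_le_of_le (fun x => D x.succ - 1)
        (fun x y hxy => Nat.sub_le_sub_right (hmono (Fin.succ_le_succ_iff.mpr hxy)) 1)
        (fun x => by have := hlow x.succ; simp only [Fin.val_succ] at this; omega)
        (fun x => by have := hlt x.succ; have := hpos x; omega),
      Fin.prod_univ_succ]
    congr 1
    · simp_rw [← Nat.lt_succ_iff, Fin.card_filter_val_lt]
      have := hlt 0
      simp only [Fin.val_zero]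
      omega
    · refine prod_congr rfl fun x _ => ?_
      have := hlow x.succ
      simp only [Fin.val_succ] at this ⊢
      omega

-- Thanks to truncated subtraction this also covers `D i < i` for some `i`: both sides vanish.
lemma card_perm_forall_apply_le {m : ℕ} (D : Fin m → ℕ) (hmono : Monotone D)
    (hlt : ∀ i, D i < m) :
    #{σ : Perm (Fin m) | ∀ i, (σ i : ℕ) ≤ D i} = ∏ i, (D i + 1 - i) := by
  by_cases hlow : ∀ i : Fin m, (i : ℕ) ≤ D i
  · exact card_perm_forall_apply_le_of_le D hmono hlow hlt
  push Not at hlow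
  obtain ⟨i, hi⟩ := hlow
  rw [prod_eq_zero (mem_univ i) (by omega), card_eq_zero, filter_eq_empty_iff]
  intro σ _ hσ
  have hmaps : Set.MapsTo σ (Iic i : Finset (Fin m)) (Iic (⟨D i, hlt i⟩ : Fin m)) := by
    intro j hj
    simp only [mem_coe, mem_Iic, Fin.le_def] at hj ⊢
    exact (hσ j).trans (hmono (Fin.le_def.mpr hj))
  have := card_le_card_of_injOn σ hmaps σ.injective.injOn
  simp only [Fin.card_Iic] at this
  omega

end PermCount

section Marking

variable {α : Type*} [DecidableEq α]

def unmarked [Fintype α] (p : Finset α × Finset α) : Finset α := univ \ (p.1 ∪ p.2)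

lemma mem_unmarked [Fintype α] {p : Finset α × Finset α} {x : α} :
    x ∈ unmarked p ↔ x ∉ p.1 ∧ x ∉ p.2 := by
  simp [unmarked]

lemma unmarked_insert_insert [Fintype α] (a b : α) (p : Finset α × Finset α) :
    unmarked (insert a p.1, insert b p.2) = ((unmarked p).erase b).erase a := by
  ext x
  simp only [unmarked, mem_sdiff, mem_univ, mem_union, mem_insert, mem_erase, true_and]
  tauto

variable [LinearOrder α]

def argminOn (w : Perm α) (s : Finset α) (hs : s.Nonempty) : α :=
  w.symm ((s.image w).min' (hs.image w))

lemma argminOn_eq_iff {w : Perm α} {s : Finset α} (hs : s.Nonempty) {t : α} :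
    argminOn w s hs = t ↔ t ∈ s ∧ ∀ x ∈ s, x ≠ t → w t < w x := by
  rw [argminOn, Equiv.symm_apply_eq]
  constructor
  · rintro h
    obtain ⟨y, hy, hyw⟩ := mem_image.mp (h ▸ min'_mem _ (hs.image w))
    rw [w.injective hyw] at hy
    refine ⟨hy, fun x hx hxt => (h ▸ min'_le _ _ (mem_image_of_mem w hx)).lt_of_ne ?_⟩
    exact w.injective.ne hxt.symm
  · rintro ⟨ht, hmin⟩
    refine le_antisymm (min'_le _ _ (mem_image_of_mem w ht)) (le_min' _ _ _ ?_)
    intro y hy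
    obtain ⟨x, hx, rfl⟩ := mem_image.mp hy
    rcases eq_or_ne x t with rfl | hxt
    exacts [le_rfl, (hmin x hx hxt).le]

lemma argminOn_mem (w : Perm α) {s : Finset α} (hs : s.Nonempty) : argminOn w s hs ∈ s :=
  ((argminOn_eq_iff hs).mp rfl).1

end Marking

section Crossout

variable {N : ℕ} (w : Perm (Fin N))

lemma crossout_succ {k : ℕ} (hu : (unmarked (crossout w k)).Nonempty)
    (ha : ((unmarked (crossout w k)).erase (argminOn w _ hu)).Nonempty) :
    crossout w (k + 1) =
      (insert (((unmarked (crossout w k)).erase (argminOn w _ hu)).min' ha) (crossout w k).1,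
        insert (argminOn w _ hu) (crossout w k).2) := by
  rw [crossout]
  exact (dif_pos hu).trans (dif_pos ha)

end Crossout

section Crossout

variable {n : ℕ} (w : Perm (Fin (2 * n)))

lemma card_unmarked_crossout {k : ℕ} (hk : k ≤ n) :
    #(unmarked (crossout w k)) = 2 * n - 2 * k := by
  induction k with
  | zero => simp [crossout, unmarked]
  | succ k ih =>
    have hcard := ih (by omega)
    have hu : (unmarked (crossout w k)).Nonempty := by rw [← card_pos]; omega
    have hb := argminOn_mem w hu
    have ha : ((unmarked (crossout w k)).erase (argminOn w _ hu)).Nonempty := by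
      rw [← card_pos, card_erase_of_mem hb]; omega
    rw [crossout_succ w hu ha, unmarked_insert_insert, card_erase_of_mem (min'_mem _ ha),
      card_erase_of_mem hb]
    omega

lemma crossout_eq_of_le {k : ℕ} (hk : n ≤ k) : crossout w k = crossout w n := by
  induction k, hk using Nat.le_induction with
  | base => rfl
  | succ k hk ih =>
    have hempty : unmarked (crossout w k) = ∅ := by
      rw [← card_eq_zero, ih, card_unmarked_crossout w le_rfl, Nat.sub_self]
    rw [crossout, dif_neg (by simpa [unmarked] using hempty), ih]

lemma markB_eq_crossout : markB w = (crossout w n).2 := by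
  rw [markB, crossout_eq_of_le w (by omega)]

end Crossout

section Schedule

variable {n : ℕ}

def prefixImage {β : Type*} [DecidableEq β] (f : Fin n → β) (k : ℕ) : Finset β :=
  ({j | (j : ℕ) < k} : Finset (Fin n)).image f

section PrefixImage

variable {β : Type*} [DecidableEq β] (f : Fin n → β)

@[simp]
lemma prefixImage_zero : prefixImage f 0 = ∅ := by
  simp [prefixImage]

lemma mem_prefixImage {k : ℕ} {x : β} :
    x ∈ prefixImage f k ↔ ∃ j : Fin n, (j : ℕ) < k ∧ f j = x := by
  simp [prefixImage]

lemma prefixImage_succ {k : ℕ} (hk : k < n) :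
    prefixImage f (k + 1) = insert (f ⟨k, hk⟩) (prefixImage f k) := by
  ext x
  simp only [mem_prefixImage, mem_insert]
  constructor
  · rintro ⟨j, hj, rfl⟩
    rcases Nat.lt_succ_iff_lt_or_eq.mp hj with hj | hj
    · exact Or.inr ⟨j, hj, rfl⟩
    · exact Or.inl (congrArg f (Fin.ext hj))
  · rintro (rfl | ⟨j, hj, rfl⟩)
    exacts [⟨_, Nat.lt_succ_self k, rfl⟩, ⟨j, hj.trans (Nat.lt_succ_self k), rfl⟩]

lemma prefixImage_self : prefixImage f n = univ.image f := by
  simp [prefixImage]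

end PrefixImage

/-- The crossout procedure with the position marked `B` in round `k` prescribed to be `τ k`. -/
def schedCrossout (τ : Fin n → Fin (2 * n)) :
    ℕ → Finset (Fin (2 * n)) × Finset (Fin (2 * n))
  | 0 => (∅, ∅)
  | k + 1 =>
    let p := schedCrossout τ k
    if h : k < n then
      if ha : ((unmarked p).erase (τ ⟨k, h⟩)).Nonempty then
        (insert (((unmarked p).erase (τ ⟨k, h⟩)).min' ha) p.1, insert (τ ⟨k, h⟩) p.2)
      else p
    else p

variable {τ : Fin n → Fin (2 * n)}

lemma schedCrossout_succ {k : ℕ} (hk : k < n) {p : Finset (Fin (2 * n)) × Finset (Fin (2 * n))}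
    {b : Fin (2 * n)} (hp : schedCrossout τ k = p) (hb : τ ⟨k, hk⟩ = b)
    (ha : ((unmarked p).erase b).Nonempty) :
    schedCrossout τ (k + 1) = (insert (((unmarked p).erase b).min' ha) p.1, insert b p.2) := by
  subst hp hb
  rw [schedCrossout]
  exact (dif_pos hk).trans (dif_pos ha)

lemma unmarked_schedCrossout_antitone {j k : ℕ} (hjk : j ≤ k) :
    unmarked (schedCrossout τ k) ⊆ unmarked (schedCrossout τ j) := by
  induction k, hjk using Nat.le_induction with
  | base => exact Subset.rfl
  | succ k _ ih =>
    refine Subset.trans ?_ ih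
    rw [schedCrossout]
    split_ifs
    · rw [unmarked_insert_insert]
      exact (erase_subset _ _).trans (erase_subset _ _)
    all_goals exact Subset.rfl

def IsAdmissible (τ : Fin n → Fin (2 * n)) : Prop :=
  ∀ k : Fin n, τ k ∈ unmarked (schedCrossout τ k)

instance : DecidablePred (IsAdmissible (n := n)) := fun τ => by
  unfold IsAdmissible; infer_instance

def FollowsSchedule (τ : Fin n → Fin (2 * n)) (j : ℕ) (w : Perm (Fin (2 * n))) : Prop :=
  ∀ k : Fin n, (k : ℕ) < j →
    ∀ x ∈ unmarked (schedCrossout τ k), x ≠ τ k → w (τ k) < w x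

instance (τ : Fin n → Fin (2 * n)) (j : ℕ) : DecidablePred (FollowsSchedule τ j) :=
  fun w => by unfold FollowsSchedule; infer_instance

lemma card_unmarked_schedCrossout (hA : IsAdmissible τ) {k : ℕ} (hk : k ≤ n) :
    #(unmarked (schedCrossout τ k)) = 2 * n - 2 * k := by
  induction k with
  | zero => simp [schedCrossout, unmarked]
  | succ k ih =>
    have hcard := ih (by omega)
    have hb : τ ⟨k, by omega⟩ ∈ unmarked (schedCrossout τ k) := hA ⟨k, by omega⟩
    have ha : ((unmarked (schedCrossout τ k)).erase (τ ⟨k, by omega⟩)).Nonempty := by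
      rw [← card_pos, card_erase_of_mem hb]; omega
    rw [schedCrossout_succ (by omega) rfl rfl ha, unmarked_insert_insert,
      card_erase_of_mem (min'_mem _ ha), card_erase_of_mem hb]
    omega

lemma apply_notMem_schedCrossout_fst (hA : IsAdmissible τ) {j : Fin n} {k : ℕ} (hkj : k ≤ j) :
    τ j ∉ (schedCrossout τ k).1 :=
  (mem_unmarked.mp (unmarked_schedCrossout_antitone hkj (hA j))).1

lemma schedCrossout_snd (hA : IsAdmissible τ) {k : ℕ} (hk : k ≤ n) :
    (schedCrossout τ k).2 = prefixImage τ k := by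
  induction k with
  | zero => simp [schedCrossout]
  | succ k ih =>
    have hb : τ ⟨k, by omega⟩ ∈ unmarked (schedCrossout τ k) := hA ⟨k, by omega⟩
    have ha : ((unmarked (schedCrossout τ k)).erase (τ ⟨k, by omega⟩)).Nonempty := by
      rw [← card_pos, card_erase_of_mem hb, card_unmarked_schedCrossout hA (by omega)]; omega
    rw [schedCrossout_succ (by omega) rfl rfl ha, prefixImage_succ _ (by omega), ih (by omega)]

end Schedule

section Bridge

variable {n : ℕ} (w : Perm (Fin (2 * n)))

lemma nonempty_unmarked_crossout {k : ℕ} (hk : k < n) : (unmarked (crossout w k)).Nonempty := by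
  rw [← card_pos, card_unmarked_crossout w hk.le]
  omega

def bSchedule (k : Fin n) : Fin (2 * n) :=
  argminOn w _ (nonempty_unmarked_crossout w k.is_lt)

lemma crossout_eq_schedCrossout_of {τ : Fin n → Fin (2 * n)}
    (h : ∀ k : Fin n, crossout w k = schedCrossout τ k → τ k = bSchedule w k) {k : ℕ}
    (hk : k ≤ n) : crossout w k = schedCrossout τ k := by
  induction k with
  | zero => rfl
  | succ k ih =>
    have hk' : k < n := by omega
    have hstep := ih hk'.le
    have hu := nonempty_unmarked_crossout w hk'
    have ha : ((unmarked (crossout w k)).erase (argminOn w _ hu)).Nonempty := by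
      rw [← card_pos, card_erase_of_mem (argminOn_mem w hu), card_unmarked_crossout w hk'.le]
      omega
    rw [crossout_succ w hu ha, schedCrossout_succ hk' hstep.symm (h ⟨k, hk'⟩ hstep) ha]
    rfl

lemma crossout_eq_schedCrossout_bSchedule {k : ℕ} (hk : k ≤ n) :
    crossout w k = schedCrossout (bSchedule w) k :=
  crossout_eq_schedCrossout_of w (fun _ _ => rfl) hk

lemma isAdmissible_bSchedule : IsAdmissible (bSchedule w) := fun k => by
  rw [← crossout_eq_schedCrossout_bSchedule w k.is_lt.le]
  exact argminOn_mem w _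

lemma followsSchedule_bSchedule : FollowsSchedule (bSchedule w) n w := fun k _ => by
  rw [← crossout_eq_schedCrossout_bSchedule w k.is_lt.le]
  exact ((argminOn_eq_iff _).mp rfl).2

lemma markB_eq_image_bSchedule : markB w = univ.image (bSchedule w) := by
  rw [markB_eq_crossout, crossout_eq_schedCrossout_bSchedule w le_rfl,
    schedCrossout_snd (isAdmissible_bSchedule w) le_rfl, prefixImage_self]

variable {w}

lemma eq_bSchedule_of_followsSchedule {τ : Fin n → Fin (2 * n)} (hA : IsAdmissible τ)
    (hF : FollowsSchedule τ n w) : τ = bSchedule w := by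
  have h : ∀ k : Fin n, crossout w k = schedCrossout τ k → τ k = bSchedule w k := fun k hk =>
    ((argminOn_eq_iff _).mpr ⟨hk ▸ hA k, hk ▸ hF k k.is_lt⟩).symm
  exact funext fun k => h k (crossout_eq_schedCrossout_of w h k.is_lt.le)

def admissibleSchedules (B : Finset (Fin (2 * n))) : Finset (Fin n → Fin (2 * n)) :=
  {τ | IsAdmissible τ ∧ univ.image τ = B}

lemma card_filter_markB_eq_sum (B : Finset (Fin (2 * n))) :
    #{w : Perm (Fin (2 * n)) | markB w = B} =
      ∑ τ ∈ admissibleSchedules B, #{w | FollowsSchedule τ n w} := by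
  refine (card_eq_sum_card_fiberwise (f := bSchedule) fun w hw => ?_).trans
    (sum_congr rfl fun τ hτ => congrArg card ?_)
  · simp only [coe_filter, mem_univ, true_and, Set.mem_ofPred_eq, admissibleSchedules] at hw ⊢
    exact ⟨isAdmissible_bSchedule w, (markB_eq_image_bSchedule w).symm.trans hw⟩
  · simp only [admissibleSchedules, mem_filter, mem_univ, true_and] at hτ
    ext w
    simp only [mem_filter, mem_univ, true_and]
    constructor
    · rintro ⟨-, rfl⟩
      exact followsSchedule_bSchedule w
    · intro hF
      obtain rfl := eq_bSchedule_of_followsSchedule hτ.1 hF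
      exact ⟨(markB_eq_image_bSchedule w).trans hτ.2, rfl⟩

end Bridge

section FollowsCount

variable {n : ℕ} {τ : Fin n → Fin (2 * n)}

lemma followsSchedule_succ_iff {j : ℕ} (hj : j < n) {w : Perm (Fin (2 * n))} :
    FollowsSchedule τ (j + 1) w ↔ FollowsSchedule τ j w ∧
      ∀ x ∈ unmarked (schedCrossout τ j), x ≠ τ ⟨j, hj⟩ →
        w (τ ⟨j, hj⟩) < w x := by
  constructor
  · intro h
    exact ⟨fun k hk => h k (by omega), h ⟨j, hj⟩ (Nat.lt_succ_self j)⟩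
  · rintro ⟨h, hj'⟩ k hk
    rcases Nat.lt_succ_iff_lt_or_eq.mp hk with hk | hk
    · exact h k hk
    · obtain rfl : k = ⟨j, hj⟩ := Fin.ext hk
      exact hj'

lemma followsSchedule_mul_swap (hA : IsAdmissible τ) {j : ℕ} (hj : j ≤ n) {u v : Fin (2 * n)}
    (hu : u ∈ unmarked (schedCrossout τ j)) (hv : v ∈ unmarked (schedCrossout τ j))
    {w : Perm (Fin (2 * n))} (hw : FollowsSchedule τ j w) :
    FollowsSchedule τ j (w * swap u v) := by
  intro k hk x hx hxk
  have hτk : τ k ∉ unmarked (schedCrossout τ j) := by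
    have : τ k ∈ (schedCrossout τ j).2 := by
      rw [schedCrossout_snd hA hj]
      exact (mem_prefixImage τ).mpr ⟨k, hk, rfl⟩
    simp [mem_unmarked, this]
  have hsub := unmarked_schedCrossout_antitone (τ := τ) hk.le
  have hfix : swap u v (τ k) = τ k :=
    swap_apply_of_ne_of_ne (fun h => hτk (h ▸ hu)) (fun h => hτk (h ▸ hv))
  rw [Perm.mul_apply, Perm.mul_apply, hfix]
  exact hw k hk _ (swap_apply_mem (hsub hu) (hsub hv) hx) (by rwa [Ne, swap_apply_eq_iff, hfix])

lemma card_followsSchedule_mul_prod (hA : IsAdmissible τ) {j : ℕ} (hj : j ≤ n) :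
    #{w | FollowsSchedule τ j w} * ∏ k ∈ range j, (2 * n - 2 * k) = (2 * n).factorial := by
  induction j with
  | zero => simp [FollowsSchedule, Fintype.card_perm]
  | succ j ih =>
    have hj' : j < n := by omega
    rw [prod_range_succ, ← mul_assoc, mul_right_comm, ← card_unmarked_schedCrossout hA hj'.le]
    have hτj : τ ⟨j, hj'⟩ ∈ unmarked (schedCrossout τ j) := hA ⟨j, hj'⟩
    rw [filter_congr fun w _ => followsSchedule_succ_iff hj']
    rw [card_filter_forall_apply_lt_mul_card _ hτj
      fun u hu v hv w hw => followsSchedule_mul_swap hA hj'.le hu hv hw, ih hj'.le]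

lemma card_followsSchedule (hA : IsAdmissible τ) :
    #{w | FollowsSchedule τ n w} = ∏ i ∈ range n, (2 * i + 1) := by
  have hpos : 0 < ∏ k ∈ range n, (2 * n - 2 * k) :=
    prod_pos fun k hk => by rw [mem_range] at hk; omega
  apply Nat.eq_of_mul_eq_mul_right hpos
  rw [card_followsSchedule_mul_prod hA le_rfl, prod_range_odd_mul_prod_range_even]

end FollowsCount

section Deadlines

variable {n : ℕ} {B : Finset (Fin (2 * n))}

-- Round `k` marks `A` at the `k`-th position outside `B` exactly when this holds.
def MeetsDeadline (hC : #Bᶜ = n) (τ : Fin n → Fin (2 * n)) (k : Fin n) : Prop :=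
  ∀ x ∈ B, x < Bᶜ.orderEmbOfFin hC k → ∃ j ≤ k, τ j = x

variable (hC : #Bᶜ = n) {τ : Fin n → Fin (2 * n)}

lemma meetsDeadline_iff (k : Fin n) :
    MeetsDeadline hC τ k ↔ ∀ x ∈ (unmarked (prefixImage (Bᶜ.orderEmbOfFin hC) k,
      prefixImage τ k)).erase (τ k), Bᶜ.orderEmbOfFin hC k ≤ x := by
  simp only [mem_erase, mem_unmarked, mem_prefixImage, not_exists, not_and]
  constructor
  · rintro hD x ⟨hxk, hxc, hxτ⟩
    by_contra! hlt
    by_cases hxB : x ∈ B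
    · obtain ⟨j, hjk, rfl⟩ := hD x hxB hlt
      rcases hjk.lt_or_eq with hjk | rfl
      exacts [hxτ j hjk rfl, hxk rfl]
    · obtain ⟨m, rfl⟩ : x ∈ Set.range (Bᶜ.orderEmbOfFin hC) := by simpa using hxB
      exact hxc m ((Bᶜ.orderEmbOfFin hC).lt_iff_lt.mp hlt) rfl
  · intro hmin x hxB hlt
    by_contra! hnot
    refine (hmin x ⟨fun h => hnot k le_rfl h.symm, fun m _ hm => ?_,
      fun j hj => hnot j hj.le⟩).not_gt hlt
    exact mem_compl.mp (hm ▸ orderEmbOfFin_mem _ hC m) hxB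

lemma orderEmbOfFin_compl_mem_erase_unmarked (hτB : ∀ j, τ j ∈ B) (k : Fin n) :
    Bᶜ.orderEmbOfFin hC k ∈
      (unmarked (prefixImage (Bᶜ.orderEmbOfFin hC) k, prefixImage τ k)).erase (τ k) := by
  have hcB : Bᶜ.orderEmbOfFin hC k ∉ B := mem_compl.mp (orderEmbOfFin_mem _ hC k)
  refine mem_erase.mpr ⟨fun h => hcB (h ▸ hτB k), mem_unmarked.mpr ⟨?_, ?_⟩⟩
  · rintro hc
    obtain ⟨j, hj, hjk⟩ := (mem_prefixImage _).mp hc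
    exact hj.ne (congrArg Fin.val ((Bᶜ.orderEmbOfFin hC).injective hjk))
  · rintro hc
    obtain ⟨j, -, hj⟩ := (mem_prefixImage _).mp hc
    exact hcB (hj ▸ hτB j)

lemma schedCrossout_eq_prefixImage (hτB : ∀ j, τ j ∈ B) {k : ℕ} (hk : k ≤ n)
    (hD : ∀ j : Fin n, (j : ℕ) < k → MeetsDeadline hC τ j) :
    schedCrossout τ k = (prefixImage (Bᶜ.orderEmbOfFin hC) k, prefixImage τ k) := by
  induction k with
  | zero => simp [schedCrossout]
  | succ k ih =>
    have hk' : k < n := by omega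
    have hmem := orderEmbOfFin_compl_mem_erase_unmarked hC hτB ⟨k, hk'⟩
    rw [schedCrossout_succ hk' (ih hk'.le fun j hj => hD j (by omega)) rfl ⟨_, hmem⟩,
      prefixImage_succ _ hk', prefixImage_succ _ hk']
    congr
    exact le_antisymm (min'_le _ _ hmem) (le_min' _ _ _
      ((meetsDeadline_iff hC ⟨k, hk'⟩).mp (hD ⟨k, hk'⟩ (Nat.lt_succ_self k))))

lemma meetsDeadline_of_isAdmissible (hA : IsAdmissible τ) (himg : univ.image τ = B) :
    ∀ k, MeetsDeadline hC τ k := by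
  have hτB (j : Fin n) : τ j ∈ B := himg ▸ mem_image_of_mem τ (mem_univ j)
  suffices ∀ k (hk : k < n), MeetsDeadline hC τ ⟨k, hk⟩ from fun k => this k k.is_lt
  intro k
  induction k using Nat.strong_induction_on with
  | _ k ih =>
  intro hk
  have hstate := schedCrossout_eq_prefixImage hC hτB hk.le fun j hj => ih j hj j.is_lt
  set c := Bᶜ.orderEmbOfFin hC
  set S := (unmarked (prefixImage c k, prefixImage τ k)).erase (τ ⟨k, hk⟩) with hS
  have hmem : c ⟨k, hk⟩ ∈ S := orderEmbOfFin_compl_mem_erase_unmarked hC hτB ⟨k, hk⟩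
  set a := S.min' ⟨_, hmem⟩ with ha
  have haS : a ∉ prefixImage c k ∧ a ∉ prefixImage τ k ∧ a ≠ τ ⟨k, hk⟩ := by
    have := min'_mem S ⟨_, hmem⟩
    rw [← ha, hS, mem_erase, mem_unmarked] at this
    exact ⟨this.2.1, this.2.2, this.1⟩
  have hstep : schedCrossout τ (k + 1) =
      (insert a (prefixImage c k), insert (τ ⟨k, hk⟩) (prefixImage τ k)) :=
    schedCrossout_succ hk hstate rfl ⟨_, hmem⟩
  rw [meetsDeadline_iff]
  suffices c ⟨k, hk⟩ ≤ a from fun x hx => this.trans (min'_le S x hx)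
  have haB : a ∉ B := by
    intro haB
    obtain ⟨j, -, hj⟩ := mem_image.mp (himg.symm ▸ haB : a ∈ univ.image τ)
    have hkj : k < j := by
      by_contra! hjk
      rcases hjk.lt_or_eq with hjk | hjk
      · exact haS.2.1 ((mem_prefixImage τ).mpr ⟨j, hjk, hj⟩)
      · exact haS.2.2 (hj.symm.trans (congrArg τ (Fin.ext hjk)))
    exact apply_notMem_schedCrossout_fst hA hkj (by rw [hj, hstep]; exact mem_insert_self _ _)
  obtain ⟨m, hm⟩ : a ∈ Set.range c := by simpa [c] using haB
  rw [← hm]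
  exact c.monotone (Fin.le_def.mpr (not_lt.mp fun hmk =>
    haS.1 ((mem_prefixImage c).mpr ⟨m, hmk, hm⟩)))

end Deadlines

section Deadlines2

variable {n : ℕ} {B : Finset (Fin (2 * n))} {τ : Fin n → Fin (2 * n)}

lemma injective_of_image_eq (hB : #B = n) (himg : univ.image τ = B) : Function.Injective τ := by
  rw [← Set.injOn_univ, ← coe_univ, ← card_image_iff, himg, hB, card_univ, Fintype.card_fin]

lemma isAdmissible_of_meetsDeadline (hB : #B = n) (hC : #Bᶜ = n) (himg : univ.image τ = B)
    (hD : ∀ k, MeetsDeadline hC τ k) : IsAdmissible τ := by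
  have hτB (j : Fin n) : τ j ∈ B := himg ▸ mem_image_of_mem τ (mem_univ j)
  intro k
  rw [schedCrossout_eq_prefixImage hC hτB k.is_lt.le fun j _ => hD j, mem_unmarked,
    mem_prefixImage, mem_prefixImage]
  refine ⟨fun ⟨m, _, hm⟩ => mem_compl.mp (hm ▸ orderEmbOfFin_mem _ hC m) (hτB k),
    fun ⟨j, hj, hjk⟩ => hj.ne (congrArg Fin.val (injective_of_image_eq hB himg hjk))⟩

lemma isAdmissible_and_image_eq_iff (hB : #B = n) (hC : #Bᶜ = n) :
    IsAdmissible τ ∧ univ.image τ = B ↔ univ.image τ = B ∧ ∀ k, MeetsDeadline hC τ k :=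
  ⟨fun ⟨hA, himg⟩ => ⟨himg, meetsDeadline_of_isAdmissible hC hA himg⟩,
    fun ⟨himg, hD⟩ => ⟨isAdmissible_of_meetsDeadline hB hC himg hD, himg⟩⟩

end Deadlines2

section Permutations

variable {n : ℕ} {B : Finset (Fin (2 * n))} (hB : #B = n)

lemma forall_le_imp_le_iff {a : Fin n} {c : ℕ} :
    (∀ k : Fin n, c ≤ k → a ≤ k) ↔ (a : ℕ) ≤ min c (n - 1) := by
  constructor
  · intro h
    rcases lt_or_ge c n with hc | hc
    · have : (a : ℕ) ≤ c := h ⟨c, hc⟩ le_rfl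
      omega
    · have := a.is_lt
      omega
  · intro h k hk
    rw [Fin.le_def]
    omega

lemma meetsDeadline_comp_symm_iff (hC : #Bᶜ = n) (σ : Perm (Fin n)) :
    (∀ k, MeetsDeadline hC (B.orderEmbOfFin hB ∘ σ.symm) k) ↔
      ∀ i, (σ i : ℕ) ≤ min #{y ∈ Bᶜ | y < B.orderEmbOfFin hB i} (n - 1) := by
  simp_rw [← forall_le_imp_le_iff]
  rw [forall_comm]
  refine forall_congr' fun k => ?_
  have hnot (i : Fin n) : B.orderEmbOfFin hB i ∉ Bᶜ :=
    fun h => mem_compl.mp h (orderEmbOfFin_mem B hB i)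
  constructor
  · intro h i hi
    obtain ⟨j, hjk, hj⟩ :=
      h _ (orderEmbOfFin_mem B hB i) ((lt_orderEmbOfFin_iff hC k (hnot i)).mpr hi)
    rw [← (B.orderEmbOfFin hB).injective hj, Equiv.apply_symm_apply]
    exact hjk
  · intro h x hx hlt
    obtain ⟨i, rfl⟩ : x ∈ Set.range (B.orderEmbOfFin hB) := by simpa using hx
    exact ⟨σ i, h i ((lt_orderEmbOfFin_iff hC k (hnot i)).mp hlt), by simp⟩

lemma image_orderEmbOfFin_comp_symm (σ : Perm (Fin n)) :
    univ.image (B.orderEmbOfFin hB ∘ σ.symm) = B := by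
  rw [← image_image, image_univ_equiv, image_orderEmbOfFin_univ]

lemma exists_orderEmbOfFin_comp_symm_eq {τ : Fin n → Fin (2 * n)} (himg : univ.image τ = B) :
    ∃ σ : Perm (Fin n), B.orderEmbOfFin hB ∘ σ.symm = τ := by
  have hτB (j : Fin n) : τ j ∈ B := himg ▸ mem_image_of_mem τ (mem_univ j)
  set f : Fin n → Fin n := fun k => (B.orderIsoOfFin hB).symm ⟨τ k, hτB k⟩
  have hf : Function.Injective f := fun x y hxy => injective_of_image_eq hB himg
    (congrArg Subtype.val ((B.orderIsoOfFin hB).symm.injective hxy))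
  refine ⟨(Equiv.ofBijective f (Finite.injective_iff_bijective.mp hf)).symm, funext fun k => ?_⟩
  simp [f, ← coe_orderIsoOfFin_apply]

lemma admissibleSchedules_eq_image (hC : #Bᶜ = n) : admissibleSchedules B =
    ({σ | ∀ i, (σ i : ℕ) ≤ min #{y ∈ Bᶜ | y < B.orderEmbOfFin hB i} (n - 1)} :
      Finset (Perm (Fin n))).image fun σ => B.orderEmbOfFin hB ∘ σ.symm := by
  ext τ
  simp only [admissibleSchedules, mem_filter, mem_univ, true_and, mem_image]
  rw [isAdmissible_and_image_eq_iff hB hC]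
  constructor
  · rintro ⟨himg, hD⟩
    obtain ⟨σ, rfl⟩ := exists_orderEmbOfFin_comp_symm_eq hB himg
    exact ⟨σ, (meetsDeadline_comp_symm_iff hB hC σ).mp hD, rfl⟩
  · rintro ⟨σ, hσ, rfl⟩
    exact ⟨image_orderEmbOfFin_comp_symm hB σ, (meetsDeadline_comp_symm_iff hB hC σ).mpr hσ⟩

lemma card_admissibleSchedules (hC : #Bᶜ = n) : #(admissibleSchedules B) =
    ∏ i : Fin n, (min #{y ∈ Bᶜ | y < B.orderEmbOfFin hB i} (n - 1) + 1 - i) := by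
  rw [admissibleSchedules_eq_image hB hC, card_image_of_injective, card_perm_forall_apply_le]
  · intro i j hij
    refine min_le_min_right _ (card_le_card fun y => ?_)
    simpa only [mem_filter] using fun ⟨hy, hlt⟩ =>
      ⟨hy, hlt.trans_le ((B.orderEmbOfFin hB).monotone hij)⟩
  · intro i
    have := i.is_lt
    omega
  · intro σ σ' h
    exact symm_bijective.injective (DFunLike.coe_injective
      ((B.orderEmbOfFin hB).injective.comp_left h))

end Permutations

lemma card_filter_markB_eq {n : ℕ} {B : Finset (Fin (2 * n))} (hB : #B = n) :
    #{w : Perm (Fin (2 * n)) | markB w = B} = (∏ i ∈ range n, (2 * i + 1)) *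
      ∏ i : Fin n, (min #{y ∈ Bᶜ | y < B.orderEmbOfFin hB i} (n - 1) + 1 - i) := by
  have hC : #Bᶜ = n := by rw [card_compl, Fintype.card_fin, hB]; omega
  rw [card_filter_markB_eq_sum,
    sum_congr rfl fun τ hτ => card_followsSchedule (mem_filter.mp hτ).2.1, sum_const,
    smul_eq_mul, card_admissibleSchedules hB hC, mul_comm]

section Dyck

variable {N : ℕ}

lemma add_two_injective : Function.Injective fun b : Fin N => (b : ℕ) + 2 :=
  fun a b hab => Fin.ext (by simpa using hab)

def pathOfMarks (B : Finset (Fin N)) : Finset ℕ :=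
  insert (N + 2) (B.image fun b : Fin N => (b : ℕ) + 2)

lemma pBset_eq_pathOfMarks (w : Perm (Fin N)) : pBset w = pathOfMarks (markB w) := rfl

lemma top_notMem_image_add_two (B : Finset (Fin N)) :
    N + 2 ∉ B.image fun b : Fin N => (b : ℕ) + 2 := by
  simp only [mem_image, not_exists, not_and]
  omega

lemma pathOfMarks_injective : Function.Injective (pathOfMarks (N := N)) := fun B B' h =>
  image_injective add_two_injective <| by
    rw [← erase_insert (top_notMem_image_add_two B),
      ← erase_insert (top_notMem_image_add_two B')]
    exact congrArg (erase · (N + 2)) h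

lemma card_pathOfMarks (B : Finset (Fin N)) : #(pathOfMarks B) = #B + 1 := by
  rw [pathOfMarks, card_insert_of_notMem (top_notMem_image_add_two B),
    card_image_of_injective _ add_two_injective]

lemma card_filter_lt_add_card_filter_compl_lt (B : Finset (Fin N)) (x : Fin N) :
    #{y ∈ B | y < x} + #{y ∈ Bᶜ | y < x} = x := by
  rw [← card_union_of_disjoint (disjoint_filter_filter disjoint_compl_right), ← filter_union,
    union_compl, filter_gt_eq_Iio, Fin.card_Iio]

lemma dstep_succ_eq_orderEmbOfFin (s : Finset ℕ) {m : ℕ} (h : #s = m) (i : Fin m) :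
    dstep s (i + 1) = s.orderEmbOfFin h i := by
  rw [dstep, orderEmbOfFin_apply, Nat.add_sub_cancel,
    List.getD_eq_getElem _ _ (by rw [length_sort, h]; exact i.is_lt)]
  rfl

variable {n : ℕ}

lemma IsDyck.exists_eq_pathOfMarks {β : Finset ℕ} (hβ : IsDyck (2 * n + 2) β) :
    ∃ B : Finset (Fin (2 * n)), β = pathOfMarks B := by
  obtain ⟨hsub, hcard, hprefix⟩ := hβ
  have hone : 1 ∉ β := fun h => by
    have h0 : #{x ∈ β | x ≤ 1} = 0 := by have := hprefix 1 (by omega); omega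
    rw [card_eq_zero, filter_eq_empty_iff] at h0
    exact h0 h le_rfl
  have htop : 2 * n + 2 ∈ β := by
    by_contra htop
    have hall : {x ∈ β | x ≤ 2 * n + 1} = β := filter_eq_self.mpr fun x hx => by
      have := mem_Icc.mp (hsub hx)
      have : x ≠ 2 * n + 2 := fun h => htop (h ▸ hx)
      omega
    have := hprefix (2 * n + 1) (by omega)
    rw [hall] at this
    omega
  refine ⟨({b | (b : ℕ) + 2 ∈ β} : Finset (Fin (2 * n))), ext fun x => ?_⟩
  rw [pathOfMarks, mem_insert, mem_image]
  constructor
  · intro hx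
    have := mem_Icc.mp (hsub hx)
    have : x ≠ 1 := fun h => hone (h ▸ hx)
    by_cases hx2 : x = 2 * n + 2
    · exact Or.inl hx2
    · refine Or.inr ⟨⟨x - 2, by omega⟩, mem_filter.mpr ⟨mem_univ _, ?_⟩,
        by simp; omega⟩
      simpa [show x - 2 + 2 = x by omega] using hx
  · rintro (rfl | ⟨b, hb, rfl⟩)
    exacts [htop, (mem_filter.mp hb).2]

variable {B : Finset (Fin (2 * n))}

lemma dstep_pathOfMarks (hB : #B = n) (i : Fin n) :
    dstep (pathOfMarks B) (i + 1) = B.orderEmbOfFin hB i + 2 := by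
  have h := dstep_succ_eq_orderEmbOfFin _ ((card_pathOfMarks B).trans (congrArg (· + 1) hB))
    i.castSucc
  rw [Fin.val_castSucc] at h
  rw [h]
  refine orderEmbOfFin_eq_of_card_filter_lt _
    (mem_insert_of_mem (mem_image_of_mem _ (orderEmbOfFin_mem B hB i))) _ ?_
  rw [filter_insert, if_neg (by omega), filter_image,
    card_image_of_injective _ add_two_injective]
  simp only [add_lt_add_iff_right, Fin.val_fin_lt]
  exact card_filter_lt_orderEmbOfFin hB i

lemma Ioc_subset_pathOfMarks_iff {x : Fin (2 * n)} (hx : x ∈ B) :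
    Ioc ((x : ℕ) + 2) (2 * n + 2) ⊆ pathOfMarks B ↔ ∀ y ∈ Bᶜ, y < x := by
  constructor
  · intro h y hy
    by_contra! hxy
    have hne : y ≠ x := fun he => mem_compl.mp hy (he ▸ hx)
    have hxy' := Fin.lt_def.mp (hxy.lt_of_ne' hne)
    have hmem : (y : ℕ) + 2 ∈ pathOfMarks B := h (mem_Ioc.mpr ⟨by omega, by omega⟩)
    rcases mem_insert.mp hmem with h2 | h2
    · omega
    · obtain ⟨z, hz, hzy⟩ := mem_image.mp h2
      exact mem_compl.mp hy (add_two_injective hzy ▸ hz)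
  · intro h z hz
    rw [mem_Ioc] at hz
    rcases hz.2.lt_or_eq with hlt | rfl
    · refine mem_insert_of_mem (mem_image.mpr ⟨⟨z - 2, by omega⟩, ?_, by simp; omega⟩)
      by_contra hnot
      have := Fin.lt_def.mp (h _ (mem_compl.mpr hnot))
      simp only at this
      omega
    · exact mem_insert_self _ _

lemma hstar_pathOfMarks (hB : #B = n) (i : Fin n) :
    hstar (2 * n + 2) (pathOfMarks B) (i + 1) =
      min #{y ∈ Bᶜ | y < B.orderEmbOfFin hB i} (n - 1) + 1 - i := by
  have hC : #Bᶜ = n := by rw [card_compl, Fintype.card_fin, hB]; omega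
  have hcount := card_filter_lt_add_card_filter_compl_lt B (B.orderEmbOfFin hB i)
  rw [card_filter_lt_orderEmbOfFin] at hcount
  have hle : #{y ∈ Bᶜ | y < B.orderEmbOfFin hB i} ≤ n := (card_filter_le _ _).trans hC.le
  have hiff := (Ioc_subset_pathOfMarks_iff (orderEmbOfFin_mem B hB i)).trans
    (card_filter_eq_iff (s := Bᶜ)).symm
  rw [hC] at hiff
  rw [hstar, ht, dstep_pathOfMarks hB i]
  split_ifs with h
  · have := hiff.mp h
    omega
  · have := mt hiff.mpr h
    omega

end Dyck

/-- Bob's marginal: for a fixed Dyck path `β` of length `2n + 2`, the number of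
permutations `w` with `p_B(w) = β` is `1·3⋯(2n-1) · ∏_{i=1}^n h_i^*(β)`. -/
theorem stmt10 (n : ℕ) (β : Finset ℕ) (hβ : IsDyck (2 * n + 2) β) :
    (Finset.univ.filter (fun w : Equiv.Perm (Fin (2 * n)) => pBset w = β)).card =
      (∏ i ∈ Finset.range n, (2 * i + 1)) * ∏ i ∈ Finset.Icc 1 n, hstar (2 * n + 2) β i := by
  obtain ⟨B, rfl⟩ := hβ.exists_eq_pathOfMarks
  have hB : #B = n := by
    have := hβ.2.1
    rw [card_pathOfMarks] at this
    omega
  simp_rw [pBset_eq_pathOfMarks, pathOfMarks_injective.eq_iff]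
  rw [card_filter_markB_eq hB, ← Ico_add_one_right_eq_Icc, prod_Ico_eq_prod_range,
    Nat.add_sub_cancel, prod_range (fun k => hstar _ _ (1 + k))]
  simp_rw [add_comm 1, hstar_pathOfMarks hB]
end
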